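/- arXiv:1009.0109 — 3 statements merged into one kernel-verified Lean document; each statement's English description precedes it below -/
import Mathlib

section
/- Let c̲ ≤ c̄ be real numbers and set C(x) := c̄ x⁺ − c̲ x⁻ for x ∈ ℝ. Let (L_t)_{t∈[0,T]} be a process with L_0 = 0, each L_t measurable, and such that c̲(t−s) ≤ L_t(ω) − L_s(ω) ≤ c̄(t−s) for all ω ∈ Ω and 0 ≤ s ≤ t ≤ T. Assume that (i) Ê(∫₀ᵀ a(s) dL_s) = ∫₀ᵀ C(a(s)) ds for every step function a on [0,T], and (ii) for every step function a the supremum defining Ê(∫₀ᵀ a(s) dL_s) is attained by some P_a ∈ 𝒫. Then for every n ∈ ℕ, every 0 ≤ t_0 ≤ t_1 ≤ ⋯ ≤ t_n ≤ T and every bounded continuous φ : ℝⁿ → ℝ, Ê[φ(L_{t_1}−L_{t_0}, …, L_{t_n}−L_{t_{n−1}})] = sup_{c_1,…,c_n ∈ [c̲,c̄]} φ(c_1(t_1−t_0), …, c_n(t_n−t_{n−1})); in particular the finite-dimensional sublinear distributions of (L_t) are determined by c̲ and c̄, with Ê(L_t) = c̄ t and −Ê(−L_t) = c̲ t. -/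
open MeasureTheory

noncomputable section

variable {Ω : Type*} [MeasurableSpace Ω]

/-- The sublinear expectation `Ê(ξ) = sup_{P ∈ 𝔓} E_P[ξ]`. -/
def sublinearE (𝔓 : Set (Measure Ω)) (ξ : Ω → ℝ) : ℝ :=
  ⨆ P : 𝔓, ∫ ω, ξ ω ∂(P : Measure Ω)

/-- The deterministic step function `a(s) = Σ_k a_k 1_{(t_k,t_{k+1}]}(s)` built from a
partition `t` and coefficients `a`. -/
def stepFunOf {n : ℕ} (t : Fin (n + 1) → ℝ) (a : Fin n → ℝ) (s : ℝ) : ℝ :=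
  ∑ k, a k * Set.indicator (Set.Ioc (t k.castSucc) (t k.succ)) (fun _ => (1:ℝ)) s

namespace Stmt8Aux

def ramp (a b s : ℝ) : ℝ := min (max s a) b - a

lemma ramp_left {a b s : ℝ} (hab : a ≤ b) (h : s ≤ a) : ramp a b s = 0 := by
  simp [ramp, max_eq_right h, min_eq_left hab]

lemma ramp_right {a b s : ℝ} (hab : a ≤ b) (h : b ≤ s) : ramp a b s = b - a := by
  simp [ramp, max_eq_left (hab.trans h), min_eq_right h]

lemma ramp_mem {a b s : ℝ} (h1 : a ≤ s) (h2 : s ≤ b) : ramp a b s = s - a := by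
  simp [ramp, max_eq_left h1, min_eq_left h2]

lemma ramp_sub_zero_left {a b x y : ℝ} (hab : a ≤ b) (h : y ≤ a) (hxy : x ≤ y) :
    ramp a b y - ramp a b x = 0 := by
  rw [ramp_left hab h, ramp_left hab (hxy.trans h), sub_zero]

lemma ramp_sub_zero_right {a b x y : ℝ} (hab : a ≤ b) (h : b ≤ x) (hxy : x ≤ y) :
    ramp a b y - ramp a b x = 0 := by
  rw [ramp_right hab h, ramp_right hab (h.trans hxy), sub_self]

lemma ramp_sub_full {a b x y : ℝ} (hax : a ≤ x) (hxy : x ≤ y) (hyb : y ≤ b) :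
    ramp a b y - ramp a b x = y - x := by
  rw [ramp_mem (hax.trans hxy) hyb, ramp_mem hax (hxy.trans hyb)]
  ring

lemma exists_cell {m : ℕ} (u : Fin (m + 1) → ℝ) (x : ℝ)
    (h0 : u 0 < x) (hl : x ≤ u (Fin.last m)) :
    ∃ j : Fin m, u j.castSucc < x ∧ x ≤ u j.succ := by
  classical
  set S : Finset (Fin (m + 1)) := Finset.univ.filter (fun k => u k < x) with hS
  have hne : S.Nonempty := ⟨0, by simp [hS, h0]⟩
  set j := S.max' hne with hj
  have hjmem : u j < x := by
    have := S.max'_mem hne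
    simpa [hS] using this
  have hjne : j ≠ Fin.last m := by
    intro h
    rw [h] at hjmem
    exact absurd hl (not_le.mpr hjmem)
  refine ⟨j.castPred hjne, ?_, ?_⟩
  · simpa [Fin.castSucc_castPred] using hjmem
  · by_contra hcon
    push_neg at hcon
    have hmem : (j.castPred hjne).succ ∈ S := by simp [hS, hcon]
    have := S.le_max' _ hmem
    rw [← hj] at this
    have h2 : (j.castPred hjne).castSucc < (j.castPred hjne).succ := Fin.castSucc_lt_succ
    rw [Fin.castSucc_castPred] at h2
    exact absurd this (not_le.mpr h2)

def gfun {n : ℕ} (clow cbar T : ℝ) (t : Fin (n + 1) → ℝ) (mm : Fin n → ℝ) (s : ℝ) : ℝ :=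
  cbar * ramp 0 (t 0) s
  + (∑ i, (cbar * ramp (t i.castSucc) (mm i) s + clow * ramp (mm i) (t i.succ) s))
  + cbar * ramp (t (Fin.last n)) T s

lemma gfun_sub {n : ℕ} (clow cbar T : ℝ) (t : Fin (n + 1) → ℝ) (mm : Fin n → ℝ)
    (x y : ℝ) :
    gfun clow cbar T t mm y - gfun clow cbar T t mm x =
      cbar * (ramp 0 (t 0) y - ramp 0 (t 0) x)
      + (∑ i, (cbar * (ramp (t i.castSucc) (mm i) y - ramp (t i.castSucc) (mm i) x)
          + clow * (ramp (mm i) (t i.succ) y - ramp (mm i) (t i.succ) x)))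
      + cbar * (ramp (t (Fin.last n)) T y - ramp (t (Fin.last n)) T x) := by
  have hsum : (∑ i : Fin n, (cbar * (ramp (t i.castSucc) (mm i) y - ramp (t i.castSucc) (mm i) x)
          + clow * (ramp (mm i) (t i.succ) y - ramp (mm i) (t i.succ) x))) =
      (∑ i : Fin n, (cbar * ramp (t i.castSucc) (mm i) y + clow * ramp (mm i) (t i.succ) y))
      - (∑ i : Fin n, (cbar * ramp (t i.castSucc) (mm i) x + clow * ramp (mm i) (t i.succ) x)) := by
    rw [← Finset.sum_sub_distrib]
    exact Finset.sum_congr rfl (fun i _ => by ring)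
  rw [hsum, gfun, gfun]
  ring

section slopes

variable {n : ℕ} {clow cbar T : ℝ} {t : Fin (n + 1) → ℝ} {mm : Fin n → ℝ}
  (ht : Monotone t) (ht0 : 0 ≤ t 0) (hTl : t (Fin.last n) ≤ T)
  (hm1 : ∀ i, t i.castSucc ≤ mm i) (hm2 : ∀ i, mm i ≤ t i.succ)

include ht ht0 hTl hm1 hm2

lemma gfun_zero : gfun clow cbar T t mm 0 = 0 := by
  have h1 : ∀ i : Fin n, (0:ℝ) ≤ t i.castSucc := fun i => ht0.trans (ht (Fin.zero_le _))
  rw [gfun, ramp_left ht0 le_rfl]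
  rw [Finset.sum_eq_zero, ramp_left hTl (ht0.trans (ht (Fin.zero_le _)))]
  · ring
  · intro i _
    rw [ramp_left (hm1 i) (h1 i), ramp_left (hm2 i) ((h1 i).trans (hm1 i))]
    ring

lemma gfun_slope_first {x y : ℝ} (hx : 0 ≤ x) (hxy : x ≤ y) (hy : y ≤ t 0) :
    gfun clow cbar T t mm y - gfun clow cbar T t mm x = cbar * (y - x) := by
  have h1 : ∀ i : Fin n, t 0 ≤ t i.castSucc := fun i => ht (Fin.zero_le _)
  rw [gfun_sub, ramp_sub_full hx hxy hy,
    ramp_sub_zero_left hTl (hy.trans (ht (Fin.zero_le _))) hxy, Finset.sum_eq_zero]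
  · ring
  · intro i _
    rw [ramp_sub_zero_left (hm1 i) (hy.trans (h1 i)) hxy,
      ramp_sub_zero_left (hm2 i) ((hy.trans (h1 i)).trans (hm1 i)) hxy]
    ring

lemma gfun_slope_last {x y : ℝ} (hx : t (Fin.last n) ≤ x) (hxy : x ≤ y) (hy : y ≤ T) :
    gfun clow cbar T t mm y - gfun clow cbar T t mm x = cbar * (y - x) := by
  have h1 : ∀ i : Fin n, t i.succ ≤ t (Fin.last n) := fun i => ht (Fin.le_last _)
  rw [gfun_sub, ramp_sub_full hx hxy hy,
    ramp_sub_zero_right ht0 ((ht (Fin.zero_le _)).trans hx) hxy, Finset.sum_eq_zero]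
  · ring
  · intro i _
    rw [ramp_sub_zero_right (hm1 i) (((hm2 i).trans (h1 i)).trans hx) hxy,
      ramp_sub_zero_right (hm2 i) ((h1 i).trans hx) hxy]
    ring

lemma gfun_slope_up {x y : ℝ} (i : Fin n) (hx : t i.castSucc ≤ x) (hxy : x ≤ y)
    (hy : y ≤ mm i) :
    gfun clow cbar T t mm y - gfun clow cbar T t mm x = cbar * (y - x) := by
  have hyi : y ≤ t i.succ := hy.trans (hm2 i)
  rw [gfun_sub, ramp_sub_zero_right ht0 ((ht (Fin.zero_le _)).trans hx) hxy,
    ramp_sub_zero_left hTl (hyi.trans (ht (Fin.le_last _))) hxy,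
    Finset.sum_eq_single i]
  · rw [ramp_sub_full hx hxy hy, ramp_sub_zero_left (hm2 i) hy hxy]
    ring
  · intro k _ hk
    rcases lt_or_gt_of_ne hk with h | h
    · have h1 : t k.succ ≤ t i.castSucc := ht (Fin.succ_le_castSucc_iff.mpr h)
      rw [ramp_sub_zero_right (hm1 k) (((hm2 k).trans h1).trans hx) hxy,
        ramp_sub_zero_right (hm2 k) (h1.trans hx) hxy]
      ring
    · have h1 : t i.succ ≤ t k.castSucc := ht (Fin.succ_le_castSucc_iff.mpr h)
      rw [ramp_sub_zero_left (hm1 k) (hyi.trans h1) hxy,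
        ramp_sub_zero_left (hm2 k) ((hyi.trans h1).trans (hm1 k)) hxy]
      ring
  · intro h; exact absurd (Finset.mem_univ i) h

lemma gfun_slope_down {x y : ℝ} (i : Fin n) (hx : mm i ≤ x) (hxy : x ≤ y)
    (hy : y ≤ t i.succ) :
    gfun clow cbar T t mm y - gfun clow cbar T t mm x = clow * (y - x) := by
  have hxi : t i.castSucc ≤ x := (hm1 i).trans hx
  rw [gfun_sub, ramp_sub_zero_right ht0 ((ht (Fin.zero_le _)).trans hxi) hxy,
    ramp_sub_zero_left hTl (hy.trans (ht (Fin.le_last _))) hxy,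
    Finset.sum_eq_single i]
  · rw [ramp_sub_full hx hxy hy, ramp_sub_zero_right (hm1 i) hx hxy]
    ring
  · intro k _ hk
    rcases lt_or_gt_of_ne hk with h | h
    · have h1 : t k.succ ≤ t i.castSucc := ht (Fin.succ_le_castSucc_iff.mpr h)
      rw [ramp_sub_zero_right (hm1 k) (((hm2 k).trans h1).trans hxi) hxy,
        ramp_sub_zero_right (hm2 k) (h1.trans hxi) hxy]
      ring
    · have h1 : t i.succ ≤ t k.castSucc := ht (Fin.succ_le_castSucc_iff.mpr h)
      rw [ramp_sub_zero_left (hm1 k) (hy.trans h1) hxy,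
        ramp_sub_zero_left (hm2 k) ((hy.trans h1).trans (hm1 k)) hxy]
      ring
  · intro h; exact absurd (Finset.mem_univ i) h

lemma gfun_incr (i : Fin n) :
    gfun clow cbar T t mm (t i.succ) - gfun clow cbar T t mm (t i.castSucc) =
      cbar * (mm i - t i.castSucc) + clow * (t i.succ - mm i) := by
  have hxy : t i.castSucc ≤ t i.succ := ht (Fin.castSucc_le_succ i)
  rw [gfun_sub, ramp_sub_zero_right ht0 (ht (Fin.zero_le _)) hxy,
    ramp_sub_zero_left hTl (ht (Fin.le_last _)) hxy,
    Finset.sum_eq_single i]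
  · rw [ramp_left (hm1 i) le_rfl, ramp_right (hm1 i) (hm2 i),
      ramp_left (hm2 i) (hm1 i), ramp_mem (hm2 i) le_rfl]
    ring
  · intro k _ hk
    rcases lt_or_gt_of_ne hk with h | h
    · have h1 : t k.succ ≤ t i.castSucc := ht (Fin.succ_le_castSucc_iff.mpr h)
      rw [ramp_sub_zero_right (hm1 k) ((hm2 k).trans h1) hxy,
        ramp_sub_zero_right (hm2 k) h1 hxy]
      ring
    · have h1 : t i.succ ≤ t k.castSucc := ht (Fin.succ_le_castSucc_iff.mpr h)
      rw [ramp_sub_zero_left (hm1 k) h1 hxy,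
        ramp_sub_zero_left (hm2 k) (h1.trans (hm1 k)) hxy]
      ring
  · intro h; exact absurd (Finset.mem_univ i) h

lemma gfun_gap {x y : ℝ} (hx0 : 0 ≤ x) (hxy : x < y) (hyT : y ≤ T)
    (hnt : ∀ i, t i ≤ x ∨ y ≤ t i) (hnm : ∀ i, mm i ≤ x ∨ y ≤ mm i) :
    gfun clow cbar T t mm y - gfun clow cbar T t mm x = cbar * (y - x) ∨
    gfun clow cbar T t mm y - gfun clow cbar T t mm x = clow * (y - x) := by
  rcases hnt 0 with h | h
  · rcases hnt (Fin.last n) with hl | hl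
    · exact Or.inl (gfun_slope_last ht ht0 hTl hm1 hm2 hl hxy.le hyT)
    · obtain ⟨i, hi1, hi2⟩ := exists_cell t y (lt_of_le_of_lt h hxy) hl
      have h2 : t i.castSucc ≤ x := by
        rcases hnt i.castSucc with h2 | h2
        · exact h2
        · exact absurd hi1 (not_lt.mpr h2)
      rcases hnm i with h3 | h3
      · exact Or.inr (gfun_slope_down ht ht0 hTl hm1 hm2 i h3 hxy.le hi2)
      · exact Or.inl (gfun_slope_up ht ht0 hTl hm1 hm2 i h2 hxy.le h3)
  · exact Or.inl (gfun_slope_first ht ht0 hTl hm1 hm2 hx0 hxy.le h)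

end slopes



lemma cell_disjoint {m : ℕ} {u : Fin (m + 1) → ℝ} (hu : Monotone u)
    {j k : Fin m} (hk : k ≠ j) {s : ℝ} (hj : s ∈ Set.Ioc (u j.castSucc) (u j.succ)) :
    s ∉ Set.Ioc (u k.castSucc) (u k.succ) := by
  intro hmem
  rcases lt_or_gt_of_ne hk with h | h
  · have h1 : u k.succ ≤ u j.castSucc := hu (Fin.succ_le_castSucc_iff.mpr h)
    linarith [hmem.1, hmem.2, hj.1]
  · have h1 : u j.succ ≤ u k.castSucc := hu (Fin.succ_le_castSucc_iff.mpr h)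
    linarith [hmem.1, hj.1, hj.2]

lemma step_eq {m : ℕ} {u : Fin (m + 1) → ℝ} (hu : Monotone u) (a : Fin m → ℝ)
    {j : Fin m} {s : ℝ} (hs : s ∈ Set.Ioc (u j.castSucc) (u j.succ)) :
    stepFunOf u a s = a j := by
  classical
  rw [stepFunOf, Finset.sum_eq_single j]
  · rw [Set.indicator_of_mem hs, mul_one]
  · intro k _ hk
    rw [Set.indicator_of_notMem (cell_disjoint hu hk hs), mul_zero]
  · intro h
    exact absurd (Finset.mem_univ j) h

lemma integral_C_step {m : ℕ} {u : Fin (m + 1) → ℝ} (hu : StrictMono u)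
    {T : ℝ} (h0 : u 0 = 0) (hl : u (Fin.last m) = T) (a : Fin m → ℝ) (C : ℝ → ℝ) :
    ∫ s in Set.Ioc (0:ℝ) T, C (stepFunOf u a s) =
      ∑ j, C (a j) * (u j.succ - u j.castSucc) := by
  classical
  have key : ∀ s ∈ Set.Ioc (0:ℝ) T,
      C (stepFunOf u a s) =
      ∑ j, Set.indicator (Set.Ioc (u j.castSucc) (u j.succ)) (fun _ => C (a j)) s := by
    intro s hs
    obtain ⟨j, hj1, hj2⟩ := exists_cell u s (by rw [h0]; exact hs.1) (by rw [hl]; exact hs.2)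
    have hj : s ∈ Set.Ioc (u j.castSucc) (u j.succ) := ⟨hj1, hj2⟩
    rw [step_eq hu.monotone a hj, Finset.sum_eq_single j]
    · rw [Set.indicator_of_mem hj]
    · intro k _ hk
      rw [Set.indicator_of_notMem (cell_disjoint hu.monotone hk hj)]
    · intro h; exact absurd (Finset.mem_univ j) h
  rw [MeasureTheory.setIntegral_congr_fun measurableSet_Ioc key]
  rw [MeasureTheory.integral_finset_sum]
  · refine Finset.sum_congr rfl fun j _ => ?_
    have hsub : Set.Ioc (u j.castSucc) (u j.succ) ⊆ Set.Ioc (0:ℝ) T := by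
      intro x hx
      constructor
      · have : u 0 ≤ u j.castSucc := hu.monotone (Fin.zero_le _)
        rw [h0] at this
        exact lt_of_le_of_lt this hx.1
      · have : u j.succ ≤ u (Fin.last m) := hu.monotone (Fin.le_last _)
        rw [hl] at this
        exact hx.2.trans this
    rw [MeasureTheory.setIntegral_indicator measurableSet_Ioc,
      Set.inter_eq_self_of_subset_right hsub, MeasureTheory.setIntegral_const]
    rw [Real.volume_real_Ioc_of_le
      (by linarith [(hu (Fin.castSucc_lt_succ (i := j))).le] : u j.castSucc ≤ u j.succ)]
    rw [smul_eq_mul, mul_comm]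
  · intro j _
    apply MeasureTheory.Integrable.indicator _ measurableSet_Ioc
    exact (MeasureTheory.integrableOn_const_iff).mpr
      (Or.inr (by rw [Real.volume_Ioc]; exact ENNReal.ofReal_lt_top))




lemma forcing {Ω₀ : Type*} [MeasurableSpace Ω₀] (𝔓 : Set (MeasureTheory.Measure Ω₀))
    (hprob : ∀ P ∈ 𝔓, IsProbabilityMeasure P)
    (T : ℝ) (clow cbar : ℝ)
    (C : ℝ → ℝ) (hC : ∀ x, C x = cbar * max x 0 - clow * max (-x) 0)
    (L : ℝ → Ω₀ → ℝ) (hL0 : ∀ ω, L 0 ω = 0)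
    (hLmeas : ∀ t : ℝ, Measurable (L t))
    (hLip : ∀ ω, ∀ s t : ℝ, 0 ≤ s → s ≤ t → t ≤ T →
      clow * (t - s) ≤ L t ω - L s ω ∧ L t ω - L s ω ≤ cbar * (t - s))
    (hrep : ∀ (n : ℕ) (tk : Fin (n + 1) → ℝ) (ak : Fin n → ℝ),
      tk 0 = 0 → tk (Fin.last n) = T → StrictMono tk →
      sublinearE 𝔓 (fun ω => ∑ k, ak k * (L (tk k.succ) ω - L (tk k.castSucc) ω)) =
        ∫ s in Set.Ioc (0:ℝ) T, C (stepFunOf tk ak s))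
    (hattain : ∀ (n : ℕ) (tk : Fin (n + 1) → ℝ) (ak : Fin n → ℝ),
      tk 0 = 0 → tk (Fin.last n) = T → StrictMono tk →
      ∃ P ∈ 𝔓,
        sublinearE 𝔓 (fun ω => ∑ k, ak k * (L (tk k.succ) ω - L (tk k.castSucc) ω)) =
          ∫ ω, (∑ k, ak k * (L (tk k.succ) ω - L (tk k.castSucc) ω)) ∂P)
    (g : ℝ → ℝ) (hg0 : g 0 = 0) (N : Finset ℝ)
    (h0N : (0:ℝ) ∈ N) (hTN : T ∈ N) (hNsub : ∀ x ∈ N, x ∈ Set.Icc (0:ℝ) T)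
    (hgap : ∀ x ∈ N, ∀ y ∈ N, x < y → (∀ z ∈ N, z ≤ x ∨ y ≤ z) →
      (g y - g x = cbar * (y - x) ∨ g y - g x = clow * (y - x))) :
    ∃ P ∈ 𝔓, ∀ p ∈ N, ∀ᵐ ω ∂P, L p ω = g p := by
  classical
  obtain ⟨m, hcard⟩ : ∃ m, N.card = m + 1 :=
    Nat.exists_eq_succ_of_ne_zero (Finset.card_ne_zero_of_mem h0N)
  set u : Fin (m + 1) → ℝ := fun j => ((N.orderIsoOfFin hcard) j : ℝ) with hu_def
  have humem : ∀ j, u j ∈ N := fun j => (N.orderIsoOfFin hcard j).2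
  have hu : StrictMono u := fun i j h => by
    exact_mod_cast (N.orderIsoOfFin hcard).strictMono h
  have hsurj : ∀ p ∈ N, ∃ j, u j = p := fun p hp =>
    ⟨(N.orderIsoOfFin hcard).symm ⟨p, hp⟩, by
      show ((N.orderIsoOfFin hcard) ((N.orderIsoOfFin hcard).symm ⟨p, hp⟩) : ℝ) = p
      rw [OrderIso.apply_symm_apply]⟩
  have hu0 : u 0 = 0 := by
    obtain ⟨j, hj⟩ := hsurj 0 h0N
    refine le_antisymm ?_ (hNsub _ (humem 0)).1
    calc u 0 ≤ u j := hu.monotone (Fin.zero_le j)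
    _ = 0 := hj
  have hul : u (Fin.last m) = T := by
    obtain ⟨j, hj⟩ := hsurj T hTN
    refine le_antisymm (hNsub _ (humem _)).2 ?_
    calc T = u j := hj.symm
    _ ≤ u (Fin.last m) := hu.monotone (Fin.le_last j)
  have hbound : ∀ j : Fin m,
      0 ≤ u j.castSucc ∧ u j.castSucc ≤ u j.succ ∧ u j.succ ≤ T := by
    intro j
    refine ⟨?_, (hu (Fin.castSucc_lt_succ (i := j))).le, ?_⟩
    · rw [← hu0]; exact hu.monotone (Fin.zero_le _)
    · rw [← hul]; exact hu.monotone (Fin.le_last _)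
  have hcell : ∀ j : Fin m,
      g (u j.succ) - g (u j.castSucc) = cbar * (u j.succ - u j.castSucc) ∨
      g (u j.succ) - g (u j.castSucc) = clow * (u j.succ - u j.castSucc) := by
    intro j
    apply hgap _ (humem _) _ (humem _) (hu (Fin.castSucc_lt_succ (i := j)))
    intro z hz
    obtain ⟨p, hp⟩ := hsurj z hz
    rcases le_or_gt p j.castSucc with h | h
    · exact Or.inl (hp ▸ hu.monotone h)
    · exact Or.inr (hp ▸ hu.monotone (Fin.castSucc_lt_iff_succ_le.mp h))
  have hC1 : C 1 = cbar := by rw [hC]; norm_num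
  have hCm1 : C (-1) = -clow := by rw [hC]; norm_num
  set ak : Fin m → ℝ := fun j =>
    if g (u j.succ) - g (u j.castSucc) = cbar * (u j.succ - u j.castSucc)
    then (1:ℝ) else -1 with hak
  obtain ⟨P, hP, hPeq⟩ := hattain m u ak hu0 hul hu
  have hval := hrep m u ak hu0 hul hu
  haveI : IsProbabilityMeasure P := hprob P hP
  set ξ : Ω₀ → ℝ := fun ω => ∑ j, ak j * (L (u j.succ) ω - L (u j.castSucc) ω) with hξ
  set Sval : ℝ := ∑ j, C (ak j) * (u j.succ - u j.castSucc) with hSval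
  have hterm_le : ∀ (j : Fin m) (ω : Ω₀),
      ak j * (L (u j.succ) ω - L (u j.castSucc) ω)
        ≤ C (ak j) * (u j.succ - u j.castSucc) := by
    intro j ω
    obtain ⟨hb1, hb2, hb3⟩ := hbound j
    obtain ⟨hl1, hl2⟩ := hLip ω (u j.castSucc) (u j.succ) hb1 hb2 hb3
    by_cases h : g (u j.succ) - g (u j.castSucc) = cbar * (u j.succ - u j.castSucc)
    · simp only [hak, if_pos h, hC1, one_mul]
      exact hl2
    · simp only [hak, if_neg h, hCm1]
      linarith
  have habsk : ∀ j : Fin m, |ak j| = 1 := by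
    intro j
    by_cases h : g (u j.succ) - g (u j.castSucc) = cbar * (u j.succ - u j.castSucc) <;>
      simp [hak, h]
  set K : ℝ := max |clow| |cbar| with hK
  have habs : ∀ ω, |ξ ω| ≤ ∑ j : Fin m, K * (u j.succ - u j.castSucc) := by
    intro ω
    refine (Finset.abs_sum_le_sum_abs _ _).trans (Finset.sum_le_sum fun j _ => ?_)
    rw [abs_mul, habsk j, one_mul]
    obtain ⟨hb1, hb2, hb3⟩ := hbound j
    obtain ⟨hl1, hl2⟩ := hLip ω (u j.castSucc) (u j.succ) hb1 hb2 hb3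
    have hΔ : (0:ℝ) ≤ u j.succ - u j.castSucc := by linarith
    rw [abs_le]
    constructor
    · have h1 : -K ≤ clow := by
        have h2 := neg_abs_le clow
        have h3 : |clow| ≤ K := le_max_left _ _
        linarith
      have h3 : -K * (u j.succ - u j.castSucc) ≤ clow * (u j.succ - u j.castSucc) :=
        mul_le_mul_of_nonneg_right h1 hΔ
      linarith
    · have h2 : cbar ≤ K := (le_abs_self cbar).trans (le_max_right _ _)
      have h3 : cbar * (u j.succ - u j.castSucc) ≤ K * (u j.succ - u j.castSucc) :=
        mul_le_mul_of_nonneg_right h2 hΔ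
      linarith
  have hξmeas : Measurable ξ := by
    apply Finset.measurable_sum
    intro j _
    exact measurable_const.mul ((hLmeas _).sub (hLmeas _))
  have hξint : MeasureTheory.Integrable ξ P := by
    refine MeasureTheory.Integrable.mono' (MeasureTheory.integrable_const
      (∑ j : Fin m, K * (u j.succ - u j.castSucc))) hξmeas.aestronglyMeasurable
      (Filter.Eventually.of_forall ?_)
    intro ω
    rw [Real.norm_eq_abs]
    exact habs ω
  have hSint : ∫ ω, ξ ω ∂P = Sval := by
    rw [← hPeq, hval]
    exact integral_C_step hu hu0 hul ak C
  have h0int : ∫ ω, (Sval - ξ ω) ∂P = 0 := by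
    rw [MeasureTheory.integral_sub (MeasureTheory.integrable_const _) hξint,
      MeasureTheory.integral_const, probReal_univ, one_smul, hSint,
      sub_self]
  have hzero : (fun ω => Sval - ξ ω) =ᵐ[P] 0 := by
    refine (MeasureTheory.integral_eq_zero_iff_of_nonneg ?_
      ((MeasureTheory.integrable_const _).sub hξint)).mp h0int
    intro ω
    have hle : ξ ω ≤ Sval := Finset.sum_le_sum fun j _ => hterm_le j ω
    simpa [Pi.sub_apply, sub_nonneg] using hle
  have haej : ∀ᵐ ω ∂P, ∀ j : Fin m,
      ak j * (L (u j.succ) ω - L (u j.castSucc) ω)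
        = C (ak j) * (u j.succ - u j.castSucc) := by
    filter_upwards [hzero] with ω hω
    simp only [Pi.zero_apply] at hω
    have hsum0 : ∑ j : Fin m, (C (ak j) * (u j.succ - u j.castSucc)
        - ak j * (L (u j.succ) ω - L (u j.castSucc) ω)) = 0 := by
      rw [Finset.sum_sub_distrib]
      exact hω
    have hterm := (Finset.sum_eq_zero_iff_of_nonneg
      (fun j _ => sub_nonneg.mpr (hterm_le j ω))).mp hsum0
    intro j
    have := hterm j (Finset.mem_univ j)
    linarith
  have haeg : ∀ᵐ ω ∂P, ∀ j : Fin m,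
      L (u j.succ) ω - L (u j.castSucc) ω = g (u j.succ) - g (u j.castSucc) := by
    filter_upwards [haej] with ω hω
    intro j
    by_cases h : g (u j.succ) - g (u j.castSucc) = cbar * (u j.succ - u j.castSucc)
    · have := hω j
      simp only [hak, if_pos h, hC1, one_mul] at this
      rw [this, h]
    · have := hω j
      simp only [hak, if_neg h, hCm1] at this
      have hg' : g (u j.succ) - g (u j.castSucc) = clow * (u j.succ - u j.castSucc) :=
        (hcell j).resolve_left h
      rw [hg']
      linarith
  have haefin : ∀ᵐ ω ∂P, ∀ j : Fin (m + 1), L (u j) ω = g (u j) := by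
    filter_upwards [haeg] with ω hω
    intro j
    induction j using Fin.induction with
    | zero => rw [hu0, hL0, hg0]
    | succ i ih =>
      have := hω i
      linarith
  refine ⟨P, hP, fun p hp => ?_⟩
  obtain ⟨j, hj⟩ := hsurj p hp
  filter_upwards [haefin] with ω hω
  rw [← hj]
  exact hω j
end Stmt8Aux

open Stmt8Aux

/-- a process `L` with `L_0 = 0` and two-sided Lipschitz bounds
`c̲(t−s) ≤ L_t − L_s ≤ c̄(t−s)`, for which `Ê(∫₀ᵀ a(s) dL_s) = ∫₀ᵀ C(a(s)) ds` for all
deterministic step functions `a` (with the supremum attained), has finite-dimensional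
sublinear distributions determined by `c̲, c̄`:
`Ê[φ(L_{t_1}−L_{t_0}, …)] = sup_{c_i ∈ [c̲,c̄]} φ(c_1(t_1−t_0), …)` for all bounded
continuous `φ`, and in particular `Ê(L_t) = c̄ t` and `−Ê(−L_t) = c̲ t`. -/
theorem stmt8 (𝔓 : Set (Measure Ω)) (h𝔓 : 𝔓.Nonempty)
    (hprob : ∀ P ∈ 𝔓, IsProbabilityMeasure P)
    (T : ℝ) (hT : 0 < T)
    (clow cbar : ℝ) (hc : clow ≤ cbar)
    (C : ℝ → ℝ) (hC : ∀ x, C x = cbar * max x 0 - clow * max (-x) 0)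
    (L : ℝ → Ω → ℝ) (hL0 : ∀ ω, L 0 ω = 0)
    (hLmeas : ∀ t : ℝ, Measurable (L t))
    (hLip : ∀ ω, ∀ s t : ℝ, 0 ≤ s → s ≤ t → t ≤ T →
      clow * (t - s) ≤ L t ω - L s ω ∧ L t ω - L s ω ≤ cbar * (t - s))
    (hrep : ∀ (n : ℕ) (tk : Fin (n + 1) → ℝ) (ak : Fin n → ℝ),
      tk 0 = 0 → tk (Fin.last n) = T → StrictMono tk →
      sublinearE 𝔓 (fun ω => ∑ k, ak k * (L (tk k.succ) ω - L (tk k.castSucc) ω)) =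
        ∫ s in Set.Ioc (0:ℝ) T, C (stepFunOf tk ak s))
    (hattain : ∀ (n : ℕ) (tk : Fin (n + 1) → ℝ) (ak : Fin n → ℝ),
      tk 0 = 0 → tk (Fin.last n) = T → StrictMono tk →
      ∃ P ∈ 𝔓,
        sublinearE 𝔓 (fun ω => ∑ k, ak k * (L (tk k.succ) ω - L (tk k.castSucc) ω)) =
          ∫ ω, (∑ k, ak k * (L (tk k.succ) ω - L (tk k.castSucc) ω)) ∂P) :
    (∀ (n : ℕ) (t : Fin (n + 1) → ℝ), Monotone t → 0 ≤ t 0 → t (Fin.last n) ≤ T →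
      ∀ φ : (Fin n → ℝ) → ℝ, Continuous φ → (∃ M, ∀ x, |φ x| ≤ M) →
        sublinearE 𝔓 (fun ω => φ (fun i => L (t i.succ) ω - L (t i.castSucc) ω)) =
          sSup ((fun c : Fin n → ℝ => φ (fun i => c i * (t i.succ - t i.castSucc))) ''
            {c | ∀ i, c i ∈ Set.Icc clow cbar})) ∧
    (∀ t ∈ Set.Icc (0:ℝ) T,
      sublinearE 𝔓 (L t) = cbar * t ∧ -sublinearE 𝔓 (fun ω => -L t ω) = clow * t) := by
  classical
  haveI hne𝔓 : Nonempty 𝔓 := h𝔓.to_subtype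
  have main : ∀ (n : ℕ) (t : Fin (n + 1) → ℝ), Monotone t → 0 ≤ t 0 → t (Fin.last n) ≤ T →
      ∀ φ : (Fin n → ℝ) → ℝ, Continuous φ → (∃ M, ∀ x, |φ x| ≤ M) →
        sublinearE 𝔓 (fun ω => φ (fun i => L (t i.succ) ω - L (t i.castSucc) ω)) =
          sSup ((fun c : Fin n → ℝ => φ (fun i => c i * (t i.succ - t i.castSucc))) ''
            {c | ∀ i, c i ∈ Set.Icc clow cbar}) := by
    intro n t hmono ht0 htlast φ hφc hφb
    obtain ⟨M, hM⟩ := hφb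
    set S := ((fun c : Fin n → ℝ => φ (fun i => c i * (t i.succ - t i.castSucc))) ''
      {c | ∀ i, c i ∈ Set.Icc clow cbar}) with hS
    have hSne : S.Nonempty := ⟨_, ⟨fun _ => clow, fun i => ⟨le_rfl, hc⟩, rfl⟩⟩
    have hSbdd : BddAbove S := by
      refine ⟨M, ?_⟩
      rintro v ⟨c, _, rfl⟩
      exact (abs_le.mp (hM _)).2
    have htb : ∀ i : Fin n, 0 ≤ t i.castSucc ∧ t i.castSucc ≤ t i.succ ∧ t i.succ ≤ T :=
      fun i => ⟨ht0.trans (hmono (Fin.zero_le _)), hmono (Fin.castSucc_le_succ i),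
        (hmono (Fin.le_last _)).trans htlast⟩
    have hXmeas : Measurable (fun ω => φ (fun i => L (t i.succ) ω - L (t i.castSucc) ω)) :=
      hφc.measurable.comp (measurable_pi_lambda _ fun i => (hLmeas _).sub (hLmeas _))
    have hintAll : ∀ Q : Measure Ω, Q ∈ 𝔓 →
        Integrable (fun ω => φ (fun i => L (t i.succ) ω - L (t i.castSucc) ω)) Q := by
      intro Q hQ
      haveI := hprob Q hQ
      exact Integrable.mono' (integrable_const M) hXmeas.aestronglyMeasurable
        (Filter.Eventually.of_forall fun ω => by rw [Real.norm_eq_abs]; exact hM _)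
    have hmem : ∀ ω, φ (fun i => L (t i.succ) ω - L (t i.castSucc) ω) ∈ S := by
      intro ω
      refine ⟨fun i => if h : t i.castSucc < t i.succ then
        (L (t i.succ) ω - L (t i.castSucc) ω) / (t i.succ - t i.castSucc) else clow,
        fun i => ?_, ?_⟩
      · dsimp only
        obtain ⟨hb1, hb2, hb3⟩ := htb i
        obtain ⟨hl1, hl2⟩ := hLip ω (t i.castSucc) (t i.succ) hb1 hb2 hb3
        by_cases h : t i.castSucc < t i.succ
        · have hd : (0:ℝ) < t i.succ - t i.castSucc := sub_pos.mpr h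
          rw [dif_pos h]
          exact ⟨(le_div_iff₀ hd).mpr hl1, (div_le_iff₀ hd).mpr hl2⟩
        · rw [dif_neg h]
          exact ⟨le_rfl, hc⟩
      · refine congrArg φ (funext fun i => ?_)
        dsimp only
        by_cases h : t i.castSucc < t i.succ
        · rw [dif_pos h, div_mul_cancel₀]
          exact sub_ne_zero.mpr (ne_of_gt h)
        · have heqt : t i.castSucc = t i.succ :=
            le_antisymm (hmono (Fin.castSucc_le_succ i)) (not_lt.mp h)
          rw [dif_neg h, ← heqt, sub_self, mul_zero, sub_self]
    apply le_antisymm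
    · refine ciSup_le fun P => ?_
      haveI := hprob P P.2
      calc ∫ ω, φ (fun i => L (t i.succ) ω - L (t i.castSucc) ω) ∂(P : Measure Ω)
          ≤ ∫ _, sSup S ∂(P : Measure Ω) :=
            integral_mono (hintAll P P.2) (integrable_const _)
              (fun ω => le_csSup hSbdd (hmem ω))
        _ = sSup S := by simp
    · refine csSup_le hSne ?_
      rintro v ⟨c, hcmem, rfl⟩
      show φ (fun i => c i * (t i.succ - t i.castSucc)) ≤ _
      set lam : Fin n → ℝ := fun i => (c i - clow) / (cbar - clow) with hlamdef
      have hlam : ∀ i : Fin n, 0 ≤ lam i ∧ lam i ≤ 1 := by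
        intro i
        rcases eq_or_lt_of_le hc with he | hlt
        · simp [hlamdef, ← he, sub_self]
        · have hpos : 0 < cbar - clow := by linarith
          exact ⟨div_nonneg (by linarith [(hcmem i).1]) hpos.le,
            (div_le_one hpos).mpr (by linarith [(hcmem i).2])⟩
      set mm : Fin n → ℝ := fun i => t i.castSucc + lam i * (t i.succ - t i.castSucc)
        with hmmdef
      have hm1 : ∀ i, t i.castSucc ≤ mm i := by
        intro i
        have hΔ : (0:ℝ) ≤ t i.succ - t i.castSucc := sub_nonneg.mpr (htb i).2.1
        have := mul_nonneg (hlam i).1 hΔ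
        simp only [hmmdef]
        linarith
      have hm2 : ∀ i, mm i ≤ t i.succ := by
        intro i
        have hΔ : (0:ℝ) ≤ t i.succ - t i.castSucc := sub_nonneg.mpr (htb i).2.1
        have := mul_le_of_le_one_left hΔ (hlam i).2
        simp only [hmmdef]
        linarith
      have key : ∀ i : Fin n,
          cbar * (mm i - t i.castSucc) + clow * (t i.succ - mm i) =
            c i * (t i.succ - t i.castSucc) := by
        intro i
        by_cases hd : cbar - clow = 0
        · have h1 : c i = clow := le_antisymm (by linarith [(hcmem i).2]) (hcmem i).1
          have h2 : mm i = t i.castSucc := by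
            simp [hmmdef, hlamdef, hd]
          rw [h2, h1]
          have h3 : cbar = clow := by linarith
          rw [h3]
          ring
        · have h3 : lam i * (cbar - clow) = c i - clow := by
            rw [hlamdef]
            exact div_mul_cancel₀ _ hd
          have h4 : mm i - t i.castSucc = lam i * (t i.succ - t i.castSucc) := by
            simp [hmmdef]
          have h5 : t i.succ - mm i =
              (t i.succ - t i.castSucc) - lam i * (t i.succ - t i.castSucc) := by
            simp [hmmdef]; ring
          rw [h4, h5]
          linear_combination (t i.succ - t i.castSucc) * h3
      set N : Finset ℝ := insert 0 (insert T
        (Finset.image t Finset.univ ∪ Finset.image mm Finset.univ)) with hN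
      have h0N : (0:ℝ) ∈ N := Finset.mem_insert_self _ _
      have hTN : T ∈ N := Finset.mem_insert_of_mem (Finset.mem_insert_self _ _)
      have htmem : ∀ i : Fin (n + 1), t i ∈ N := fun i =>
        Finset.mem_insert_of_mem (Finset.mem_insert_of_mem
          (Finset.mem_union_left _ (Finset.mem_image_of_mem t (Finset.mem_univ i))))
      have hmmmem : ∀ i : Fin n, mm i ∈ N := fun i =>
        Finset.mem_insert_of_mem (Finset.mem_insert_of_mem
          (Finset.mem_union_right _ (Finset.mem_image_of_mem mm (Finset.mem_univ i))))
      have hNsub : ∀ x ∈ N, x ∈ Set.Icc (0:ℝ) T := by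
        intro x hx
        rw [hN] at hx
        simp only [Finset.mem_insert, Finset.mem_union, Finset.mem_image,
          Finset.mem_univ, true_and] at hx
        rcases hx with rfl | rfl | ⟨i, rfl⟩ | ⟨i, rfl⟩
        · exact ⟨le_rfl, hT.le⟩
        · exact ⟨hT.le, le_rfl⟩
        · exact ⟨ht0.trans (hmono (Fin.zero_le _)), (hmono (Fin.le_last _)).trans htlast⟩
        · exact ⟨(htb i).1.trans (hm1 i), (hm2 i).trans (htb i).2.2⟩
      have hgap : ∀ x ∈ N, ∀ y ∈ N, x < y → (∀ z ∈ N, z ≤ x ∨ y ≤ z) →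
          (gfun clow cbar T t mm y - gfun clow cbar T t mm x = cbar * (y - x) ∨
           gfun clow cbar T t mm y - gfun clow cbar T t mm x = clow * (y - x)) := by
        intro x hx y hy hxy hbet
        exact gfun_gap hmono ht0 htlast hm1 hm2 (hNsub x hx).1 hxy (hNsub y hy).2
          (fun i => hbet _ (htmem i)) (fun i => hbet _ (hmmmem i))
      obtain ⟨P, hP, hPae⟩ := forcing 𝔓 hprob T clow cbar C hC L hL0 hLmeas hLip hrep
        hattain (gfun clow cbar T t mm) (gfun_zero hmono ht0 htlast hm1 hm2)
        N h0N hTN hNsub hgap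
      haveI := hprob P hP
      have hinc : ∀ᵐ ω ∂P, ∀ i : Fin n,
          L (t i.succ) ω - L (t i.castSucc) ω = c i * (t i.succ - t i.castSucc) := by
        rw [MeasureTheory.ae_all_iff]
        intro i
        filter_upwards [hPae (t i.succ) (htmem i.succ), hPae (t i.castSucc)
          (htmem i.castSucc)] with ω h1 h2
        rw [h1, h2, gfun_incr hmono ht0 htlast hm1 hm2 i, key i]
      have heq : (fun ω => φ (fun i => L (t i.succ) ω - L (t i.castSucc) ω)) =ᵐ[P]
          (fun _ => φ (fun i => c i * (t i.succ - t i.castSucc))) := by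
        filter_upwards [hinc] with ω hω
        exact congrArg φ (funext fun i => hω i)
      have hPint : ∫ ω, φ (fun i => L (t i.succ) ω - L (t i.castSucc) ω) ∂P =
          φ (fun i => c i * (t i.succ - t i.castSucc)) := by
        rw [MeasureTheory.integral_congr_ae heq]
        simp
      have hbddR : BddAbove (Set.range fun Q : 𝔓 =>
          ∫ ω, φ (fun i => L (t i.succ) ω - L (t i.castSucc) ω) ∂(Q : Measure Ω)) := by
        refine ⟨M, ?_⟩
        rintro v ⟨Q, rfl⟩
        haveI := hprob Q Q.2
        calc ∫ ω, φ (fun i => L (t i.succ) ω - L (t i.castSucc) ω) ∂(Q : Measure Ω)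
            ≤ ∫ _, M ∂(Q : Measure Ω) :=
              integral_mono (hintAll Q Q.2) (integrable_const _)
                (fun ω => (abs_le.mp (hM _)).2)
          _ = M := by simp
      calc φ (fun i => c i * (t i.succ - t i.castSucc))
          = ∫ ω, φ (fun i => L (t i.succ) ω - L (t i.castSucc) ω) ∂P := hPint.symm
        _ ≤ sublinearE 𝔓 (fun ω => φ (fun i => L (t i.succ) ω - L (t i.castSucc) ω)) :=
            le_ciSup hbddR (⟨P, hP⟩ : 𝔓)
  refine ⟨main, ?_⟩
  intro tt htt
  set K : ℝ := max |clow| |cbar| with hK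
  have hK0 : (0:ℝ) ≤ K := le_trans (abs_nonneg clow) (le_max_left _ _)
  have hKl : -K ≤ clow := by
    have h1 := neg_abs_le clow
    have h2 : |clow| ≤ K := le_max_left _ _
    linarith
  have hKu : cbar ≤ K := (le_abs_self cbar).trans (le_max_right _ _)
  set B : ℝ := K * T + 1 with hB
  have hKT : (0:ℝ) ≤ K * T := mul_nonneg hK0 hT.le
  have hclamp : ∀ v : ℝ, |v| ≤ K * T → max (-B) (min v B) = v := by
    intro v hv
    obtain ⟨hv1, hv2⟩ := abs_le.mp hv
    rw [min_eq_left (by linarith), max_eq_right (by linarith)]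
  have hrange : ∀ v : ℝ, clow * tt ≤ v → v ≤ cbar * tt → |v| ≤ K * T := by
    intro v h1 h2
    have e1 : -K * tt ≤ clow * tt := mul_le_mul_of_nonneg_right hKl htt.1
    have e2 : cbar * tt ≤ K * tt := mul_le_mul_of_nonneg_right hKu htt.1
    have e3 : K * tt ≤ K * T := mul_le_mul_of_nonneg_left htt.2 hK0
    rw [abs_le]
    constructor <;> linarith
  have hLb : ∀ ω, clow * tt ≤ L tt ω ∧ L tt ω ≤ cbar * tt := by
    intro ω
    obtain ⟨h1, h2⟩ := hLip ω 0 tt le_rfl htt.1 htt.2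
    rw [hL0 ω] at h1 h2
    constructor <;> [linarith; linarith]
  set tvec : Fin 2 → ℝ := fun i => if i = 0 then 0 else tt with htvec
  have htv0 : tvec 0 = 0 := by simp [htvec]
  have htv1 : tvec 1 = tt := by simp [htvec]
  have htvmono : Monotone tvec := by
    intro a b hab
    by_cases ha : a = 0
    · subst ha
      by_cases hb : b = 0
      · subst hb
        exact le_rfl
      · have hbv : tvec b = tt := by simp [htvec, hb]
        rw [htv0, hbv]
        exact htt.1
    · have hb : b ≠ 0 := by
        intro h
        subst h
        exact ha (Fin.le_zero_iff.mp hab)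
      have hav : tvec a = tt := by simp [htvec, ha]
      have hbv : tvec b = tt := by simp [htvec, hb]
      rw [hav, hbv]
  have htvlast : tvec (Fin.last 1) = tt := htv1
  have hsuccval : ∀ (f : Fin 1 → ℝ), ∀ i : Fin 1, f i = f 0 := by
    intro f i
    rw [Subsingleton.elim i 0]
  have hcs : ∀ i : Fin 1, tvec i.succ = tt ∧ tvec i.castSucc = 0 := by
    intro i
    rw [Subsingleton.elim i 0]
    constructor
    · exact htv1
    · exact htv0
  constructor
  · -- sublinearE 𝔓 (L tt) = cbar * tt
    set φ1 : (Fin 1 → ℝ) → ℝ := fun x => max (-B) (min (x 0) B) with hφ1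
    have hφ1c : Continuous φ1 :=
      continuous_const.max ((continuous_apply 0).min continuous_const)
    have hφ1b : ∀ x, |φ1 x| ≤ B := by
      intro x
      rw [abs_le]
      exact ⟨le_max_left _ _, max_le (by linarith) (min_le_right _ _)⟩
    have h1 := main 1 tvec htvmono (le_of_eq htv0.symm) (by rw [htvlast]; exact htt.2)
      φ1 hφ1c ⟨B, hφ1b⟩
    have hfun : (fun ω => φ1 (fun i => L (tvec i.succ) ω - L (tvec i.castSucc) ω)) =
        L tt := by
      funext ω
      have harg : (fun i : Fin 1 => L (tvec i.succ) ω - L (tvec i.castSucc) ω) =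
          (fun _ : Fin 1 => L tt ω) := by
        funext i
        rw [(hcs i).1, (hcs i).2, hL0 ω, sub_zero]
      rw [harg]
      exact hclamp _ (hrange _ (hLb ω).1 (hLb ω).2)
    rw [hfun] at h1
    rw [h1]
    apply IsGreatest.csSup_eq
    constructor
    · refine ⟨fun _ => cbar, fun i => ⟨hc, le_rfl⟩, ?_⟩
      have harg : (fun i : Fin 1 => (fun _ : Fin 1 => cbar) i *
          (tvec i.succ - tvec i.castSucc)) = (fun _ : Fin 1 => cbar * tt) := by
        funext i
        rw [(hcs i).1, (hcs i).2, sub_zero]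
      show φ1 (fun i => (fun _ : Fin 1 => cbar) i * (tvec i.succ - tvec i.castSucc)) = cbar * tt
      rw [harg]
      exact hclamp _ (hrange _ (mul_le_mul_of_nonneg_right hc htt.1) le_rfl)
    · rintro v ⟨c, hcmem, rfl⟩
      have harg : (fun i : Fin 1 => c i * (tvec i.succ - tvec i.castSucc)) =
          (fun _ : Fin 1 => c 0 * tt) := by
        funext i
        rw [(hcs i).1, (hcs i).2, sub_zero, Subsingleton.elim i 0]
      show φ1 (fun i => c i * (tvec i.succ - tvec i.castSucc)) ≤ cbar * tt
      rw [harg]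
      have hcb1 : clow * tt ≤ c 0 * tt := mul_le_mul_of_nonneg_right (hcmem 0).1 htt.1
      have hcb2 : c 0 * tt ≤ cbar * tt := mul_le_mul_of_nonneg_right (hcmem 0).2 htt.1
      exact le_trans (le_of_eq (hclamp _ (hrange _ hcb1 hcb2))) hcb2
  · -- -sublinearE 𝔓 (fun ω => -L tt ω) = clow * tt
    set φ2 : (Fin 1 → ℝ) → ℝ := fun x => max (-B) (min (-x 0) B) with hφ2
    have hφ2c : Continuous φ2 :=
      continuous_const.max (((continuous_apply 0).neg).min continuous_const)
    have hφ2b : ∀ x, |φ2 x| ≤ B := by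
      intro x
      rw [abs_le]
      exact ⟨le_max_left _ _, max_le (by linarith) (min_le_right _ _)⟩
    have h2 := main 1 tvec htvmono (le_of_eq htv0.symm) (by rw [htvlast]; exact htt.2)
      φ2 hφ2c ⟨B, hφ2b⟩
    have hrange2 : ∀ v : ℝ, clow * tt ≤ v → v ≤ cbar * tt → |(-v)| ≤ K * T := by
      intro v h1 h2
      rw [abs_neg]
      exact hrange v h1 h2
    have hfun : (fun ω => φ2 (fun i => L (tvec i.succ) ω - L (tvec i.castSucc) ω)) =
        (fun ω => -L tt ω) := by
      funext ω
      have harg : (fun i : Fin 1 => L (tvec i.succ) ω - L (tvec i.castSucc) ω) =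
          (fun _ : Fin 1 => L tt ω) := by
        funext i
        rw [(hcs i).1, (hcs i).2, hL0 ω, sub_zero]
      rw [harg]
      exact hclamp _ (hrange2 _ (hLb ω).1 (hLb ω).2)
    rw [hfun] at h2
    rw [h2]
    have hsup : sSup ((fun c : Fin 1 → ℝ => φ2 (fun i => c i *
        (tvec i.succ - tvec i.castSucc))) '' {c | ∀ i, c i ∈ Set.Icc clow cbar}) =
        -(clow * tt) := by
      apply IsGreatest.csSup_eq
      constructor
      · refine ⟨fun _ => clow, fun i => ⟨le_rfl, hc⟩, ?_⟩
        have harg : (fun i : Fin 1 => (fun _ : Fin 1 => clow) i *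
            (tvec i.succ - tvec i.castSucc)) = (fun _ : Fin 1 => clow * tt) := by
          funext i
          rw [(hcs i).1, (hcs i).2, sub_zero]
        show φ2 (fun i => (fun _ : Fin 1 => clow) i * (tvec i.succ - tvec i.castSucc)) = -(clow * tt)
        rw [harg]
        exact hclamp _ (hrange2 _ le_rfl (mul_le_mul_of_nonneg_right hc htt.1))
      · rintro v ⟨c, hcmem, rfl⟩
        have harg : (fun i : Fin 1 => c i * (tvec i.succ - tvec i.castSucc)) =
            (fun _ : Fin 1 => c 0 * tt) := by
          funext i
          rw [(hcs i).1, (hcs i).2, sub_zero, Subsingleton.elim i 0]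
        show φ2 (fun i => c i * (tvec i.succ - tvec i.castSucc)) ≤ -(clow * tt)
        rw [harg]
        have hcb1 : clow * tt ≤ c 0 * tt := mul_le_mul_of_nonneg_right (hcmem 0).1 htt.1
        have hcb2 : c 0 * tt ≤ cbar * tt := mul_le_mul_of_nonneg_right (hcmem 0).2 htt.1
        refine le_trans (le_of_eq (hclamp (-(c 0 * tt)) (hrange2 _ hcb1 hcb2))) ?_
        linarith
    rw [hsup]
    ring
end
end

section
/- Let c̲ ≤ c̄ be real numbers and let L : [0,T] → ℝ satisfy L(0) = 0 and c̲(t−s) ≤ L(t) − L(s) ≤ c̄(t−s) for all 0 ≤ s ≤ t ≤ T. Let a(t) = Σ_{k=0}^{n−1} a_k 1_{(t_k,t_{k+1}]}(t) be a step function with a_k ≠ 0 for every k, and define θ^a(s) := c̄ on {s : a(s) ≥ 0} and θ^a(s) := c̲ on {s : a(s) < 0}. If Σ_{k=0}^{n−1} a_k (L(t_{k+1}) − L(t_k)) = ∫₀ᵀ a(s) θ^a(s) ds, then L(t) = ∫₀ᵗ θ^a(s) ds for all t ∈ [0,T]. -/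
open MeasureTheory

noncomputable section

/-- let `L : [0,T] → ℝ` satisfy `L(0) = 0` and
`c̲(t−s) ≤ L(t) − L(s) ≤ c̄(t−s)`, let `a` be a deterministic step function with nonzero
coefficients and `θ^a = c̄` on `{a ≥ 0}`, `θ^a = c̲` on `{a < 0}`. If
`Σ_k a_k (L(t_{k+1}) − L(t_k)) = ∫₀ᵀ a(s) θ^a(s) ds`, then `L(t) = ∫₀ᵗ θ^a(s) ds` for all
`t ∈ [0,T]`. -/
theorem stmt9 (T : ℝ) (hT : 0 < T) (clow cbar : ℝ) (hc : clow ≤ cbar)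
    (L : ℝ → ℝ) (hL0 : L 0 = 0)
    (hLip : ∀ s t : ℝ, 0 ≤ s → s ≤ t → t ≤ T →
      clow * (t - s) ≤ L t - L s ∧ L t - L s ≤ cbar * (t - s))
    (n : ℕ) (tk : Fin (n + 1) → ℝ) (ak : Fin n → ℝ)
    (ht0 : tk 0 = 0) (htn : tk (Fin.last n) = T) (hmono : StrictMono tk)
    (hak : ∀ k, ak k ≠ 0)
    (a : ℝ → ℝ)
    (ha : ∀ s, a s =
      ∑ k, ak k * Set.indicator (Set.Ioc (tk k.castSucc) (tk k.succ)) (fun _ => (1:ℝ)) s)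
    (θ : ℝ → ℝ) (hθ : ∀ s, θ s = if 0 ≤ a s then cbar else clow)
    (heq : ∑ k, ak k * (L (tk k.succ) - L (tk k.castSucc)) =
      ∫ s in (0:ℝ)..T, a s * θ s) :
    ∀ t ∈ Set.Icc (0:ℝ) T, L t = ∫ s in (0:ℝ)..t, θ s := by
  classical
  have hmon := hmono.monotone
  have htk0 : ∀ j, 0 ≤ tk j := fun j => ht0 ▸ hmon (Fin.zero_le j)
  have htkT : ∀ j, tk j ≤ T := fun j => htn ▸ hmon (Fin.le_last j)
  have hcs : ∀ k : Fin n, tk k.castSucc < tk k.succ :=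
    fun k => hmono (Fin.castSucc_lt_succ (i := k))
  set θk : Fin n → ℝ := fun k => if 0 ≤ ak k then cbar else clow with hθkdef
  -- value of a on each interval
  have haval : ∀ k : Fin n, ∀ s ∈ Set.Ioc (tk k.castSucc) (tk k.succ), a s = ak k := by
    intro k s hs
    rw [ha, Finset.sum_eq_single k]
    · rw [Set.indicator_of_mem hs, mul_one]
    · intro j _ hj
      rw [Set.indicator_of_notMem, mul_zero]
      intro hsj
      rcases lt_or_gt_of_ne hj with h | h
      · have hv : j.val < k.val := h
        have h1 : tk j.succ ≤ tk k.castSucc := by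
          apply hmon
          rw [Fin.le_def]
          simp only [Fin.val_succ, Fin.coe_castSucc]
          omega
        have := hsj.2
        have := hs.1
        linarith
      · have hv : k.val < j.val := h
        have h1 : tk k.succ ≤ tk j.castSucc := by
          apply hmon
          rw [Fin.le_def]
          simp only [Fin.val_succ, Fin.coe_castSucc]
          omega
        have := hsj.1
        have := hs.2
        linarith
    · intro hk; exact absurd (Finset.mem_univ k) hk
  have hθval : ∀ k : Fin n, ∀ s ∈ Set.Ioc (tk k.castSucc) (tk k.succ), θ s = θk k := by
    intro k s hs
    rw [hθ, haval k s hs, hθkdef]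
  -- measurability and integrability of θ
  have hameas : Measurable a := by
    have : a = fun s => ∑ k, ak k *
        Set.indicator (Set.Ioc (tk k.castSucc) (tk k.succ)) (fun _ => (1:ℝ)) s :=
      funext ha
    rw [this]
    exact Finset.measurable_sum _ fun k _ =>
      (Measurable.indicator measurable_const measurableSet_Ioc).const_mul _
  have hθmeas : Measurable θ := by
    have : θ = fun s => if 0 ≤ a s then cbar else clow := funext hθ
    rw [this]
    exact Measurable.ite (measurableSet_le measurable_const hameas)
      measurable_const measurable_const
  have hθbd : ∀ s, ‖θ s‖ ≤ max |clow| |cbar| := by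
    intro s
    rw [hθ]
    split
    · rw [Real.norm_eq_abs]; exact le_max_right _ _
    · rw [Real.norm_eq_abs]; exact le_max_left _ _
  have hθIoc : ∀ c d : ℝ, IntegrableOn θ (Set.Ioc c d) := by
    intro c d
    have hconst : IntegrableOn (fun _ : ℝ => max |clow| |cbar|) (Set.Ioc c d) :=
      integrableOn_const measure_Ioc_lt_top.ne
    exact hconst.mono' hθmeas.aestronglyMeasurable.restrict
      (Filter.Eventually.of_forall hθbd)
  have hθint : ∀ c d : ℝ, IntervalIntegrable θ volume c d :=
    fun c d => ⟨hθIoc _ _, hθIoc _ _⟩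
  -- integral of a*θ on each interval
  have hint1 : ∀ k : Fin n, ∫ s in (tk k.castSucc)..(tk k.succ), a s * θ s
      = ak k * θk k * (tk k.succ - tk k.castSucc) := by
    intro k
    rw [intervalIntegral.integral_of_le (hcs k).le,
      setIntegral_congr_fun measurableSet_Ioc
        (g := fun _ => ak k * θk k) (fun s hs => by rw [haval k s hs, hθval k s hs]),
      setIntegral_const, Real.volume_real_Ioc_of_le (by linarith [hcs k]),
      smul_eq_mul]
    ring
  -- total integral
  set t' : ℕ → ℝ := fun i => tk ⟨min i n, Nat.lt_succ_of_le (min_le_right _ _)⟩ with ht'def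
  have ht'cs : ∀ k : Fin n, t' k.val = tk k.castSucc := by
    intro k
    simp only [ht'def]
    congr 1
    ext
    simp [Nat.min_eq_left k.isLt.le]
  have ht'succ : ∀ k : Fin n, t' (k.val + 1) = tk k.succ := by
    intro k
    simp only [ht'def]
    congr 1
    ext
    simp [Nat.min_eq_left k.isLt]
  have hadj : ∀ i < n, IntervalIntegrable (fun s => a s * θ s) volume (t' i) (t' (i + 1)) := by
    intro i hi
    set k : Fin n := ⟨i, hi⟩ with hk
    rw [show t' i = tk k.castSucc from ht'cs k, show t' (i+1) = tk k.succ from ht'succ k,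
      intervalIntegrable_iff_integrableOn_Ioc_of_le (hcs k).le]
    have hc' : IntegrableOn (fun _ : ℝ => ak k * θk k)
        (Set.Ioc (tk k.castSucc) (tk k.succ)) :=
      integrableOn_const measure_Ioc_lt_top.ne
    exact hc'.congr_fun
      (fun s hs => by rw [haval k s hs, hθval k s hs]) measurableSet_Ioc
  have htotal : (∫ s in (0:ℝ)..T, a s * θ s)
      = ∑ k : Fin n, ak k * θk k * (tk k.succ - tk k.castSucc) := by
    have hsum := intervalIntegral.sum_integral_adjacent_intervals hadj
    have e0 : t' 0 = 0 := by
      simp only [ht'def]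
      rw [show (⟨min 0 n, _⟩ : Fin (n+1)) = 0 by ext; simp]
      exact ht0
    have en : t' n = T := by
      simp only [ht'def]
      rw [show (⟨min n n, _⟩ : Fin (n+1)) = Fin.last n by ext; simp]
      exact htn
    rw [e0, en] at hsum
    rw [← hsum, ← Fin.sum_univ_eq_sum_range (fun i => ∫ s in t' i..t' (i+1), a s * θ s) n]
    refine Finset.sum_congr rfl fun k _ => ?_
    rw [ht'cs k, ht'succ k]
    exact hint1 k
  -- termwise inequality
  have hterm_le : ∀ k : Fin n,
      ak k * (L (tk k.succ) - L (tk k.castSucc)) ≤ ak k * θk k * (tk k.succ - tk k.castSucc) := by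
    intro k
    have hLk := hLip (tk k.castSucc) (tk k.succ) (htk0 _) (hcs k).le (htkT _)
    by_cases h : 0 ≤ ak k
    · have hθe : θk k = cbar := if_pos h
      rw [hθe]
      calc ak k * (L (tk k.succ) - L (tk k.castSucc))
          ≤ ak k * (cbar * (tk k.succ - tk k.castSucc)) :=
            mul_le_mul_of_nonneg_left hLk.2 h
        _ = ak k * cbar * (tk k.succ - tk k.castSucc) := by ring
    · have hθe : θk k = clow := if_neg h
      rw [hθe]
      calc ak k * (L (tk k.succ) - L (tk k.castSucc))
          ≤ ak k * (clow * (tk k.succ - tk k.castSucc)) :=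
            mul_le_mul_of_nonpos_left hLk.1 (le_of_not_ge h)
        _ = ak k * clow * (tk k.succ - tk k.castSucc) := by ring
  -- termwise equality
  have hterm_eq : ∀ k : Fin n,
      L (tk k.succ) - L (tk k.castSucc) = θk k * (tk k.succ - tk k.castSucc) := by
    have hsum : ∑ k, ak k * (L (tk k.succ) - L (tk k.castSucc))
        = ∑ k : Fin n, ak k * θk k * (tk k.succ - tk k.castSucc) := heq.trans htotal
    have hall := (Finset.sum_eq_sum_iff_of_le (fun k _ => hterm_le k)).1 hsum
    intro k
    have hk := hall k (Finset.mem_univ k)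
    have : ak k * (L (tk k.succ) - L (tk k.castSucc))
        = ak k * (θk k * (tk k.succ - tk k.castSucc)) := by
      rw [hk]; ring
    exact mul_left_cancel₀ (hak k) this
  -- L is linear on each interval
  have hinterval : ∀ k : Fin n, ∀ t ∈ Set.Icc (tk k.castSucc) (tk k.succ),
      L t - L (tk k.castSucc) = θk k * (t - tk k.castSucc) := by
    intro k t ht
    have h1 := hLip (tk k.castSucc) t (htk0 _) ht.1 (le_trans ht.2 (htkT _))
    have h2 := hLip t (tk k.succ) (le_trans (htk0 _) ht.1) ht.2 (htkT _)
    have h3 := hterm_eq k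
    by_cases h : 0 ≤ ak k
    · have hθe : θk k = cbar := if_pos h
      rw [hθe] at h3 ⊢
      nlinarith [h1.2, h2.2]
    · have hθe : θk k = clow := if_neg h
      rw [hθe] at h3 ⊢
      nlinarith [h1.1, h2.1]
  -- integral of θ on partial intervals
  have hIint : ∀ k : Fin n, ∀ t ∈ Set.Icc (tk k.castSucc) (tk k.succ),
      ∫ s in (tk k.castSucc)..t, θ s = θk k * (t - tk k.castSucc) := by
    intro k t ht
    rw [intervalIntegral.integral_of_le ht.1,
      setIntegral_congr_fun measurableSet_Ioc
        (g := fun _ => θk k) (fun s hs => hθval k s ⟨hs.1, le_trans hs.2 ht.2⟩),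
      setIntegral_const, Real.volume_real_Ioc_of_le ht.1,
      smul_eq_mul]
    ring
  -- node values
  have hnode : ∀ j : Fin (n + 1), L (tk j) = ∫ s in (0:ℝ)..(tk j), θ s := by
    intro j
    induction j using Fin.induction with
    | zero => rw [ht0, hL0, intervalIntegral.integral_same]
    | succ k ih =>
      have h1 := hinterval k (tk k.succ) ⟨(hcs k).le, le_refl _⟩
      have h2 := hIint k (tk k.succ) ⟨(hcs k).le, le_refl _⟩
      have h3 := intervalIntegral.integral_add_adjacent_intervals
        (hθint 0 (tk k.castSucc)) (hθint (tk k.castSucc) (tk k.succ))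
      linarith
  -- covering lemma
  have hcover : ∀ t : ℝ, 0 < t → t ≤ T →
      ∃ k : Fin n, tk k.castSucc < t ∧ t ≤ tk k.succ := by
    intro t htpos htT
    set S : Finset (Fin (n + 1)) := Finset.univ.filter (fun j => tk j < t) with hSdef
    have hS0 : (0 : Fin (n + 1)) ∈ S := by
      simp only [hSdef, Finset.mem_filter, Finset.mem_univ, true_and, ht0]
      exact htpos
    set j : Fin (n + 1) := S.max' ⟨0, hS0⟩ with hjdef
    have hjmem : j ∈ S := S.max'_mem _
    have hjlt : tk j < t := by
      simpa only [hSdef, Finset.mem_filter, Finset.mem_univ, true_and] using hjmem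
    have hjne : j ≠ Fin.last n := by
      intro hEq
      rw [hEq, htn] at hjlt
      linarith
    have hjv : j.val < n := by
      have := Fin.val_lt_last hjne
      exact this
    refine ⟨⟨j.val, hjv⟩, ?_, ?_⟩
    · have hcast : (⟨j.val, hjv⟩ : Fin n).castSucc = j := by ext; simp
      rw [hcast]; exact hjlt
    · by_contra hlt
      push_neg at hlt
      have hmem : (⟨j.val, hjv⟩ : Fin n).succ ∈ S := by
        simp only [hSdef, Finset.mem_filter, Finset.mem_univ, true_and]
        exact hlt
      have hle := Finset.le_max' S _ hmem
      rw [← hjdef] at hle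
      have hjlt2 : j < (⟨j.val, hjv⟩ : Fin n).succ := by
        rw [Fin.lt_def]; simp
      exact absurd hle (not_le.2 hjlt2)
  -- conclusion
  intro t ht
  rcases eq_or_lt_of_le ht.1 with h0 | h0
  · rw [← h0, hL0, intervalIntegral.integral_same]
  · obtain ⟨k, h1, h2⟩ := hcover t h0 ht.2
    have hA := hinterval k t ⟨h1.le, h2⟩
    have hB := hIint k t ⟨h1.le, h2⟩
    have hC := hnode k.castSucc
    have hD := intervalIntegral.integral_add_adjacent_intervals
      (hθint 0 (tk k.castSucc)) (hθint (tk k.castSucc) t)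
    linarith
end
end

section
/- Let Ω be a metric space and let E : C_b(Ω) → ℝ be a functional on the space of bounded continuous real-valued functions on Ω satisfying: (monotonicity) E(ξ) ≥ E(ζ) whenever ξ ≥ ζ pointwise; (constant preserving) E(c) = c for every constant function c; (subadditivity) E(ξ + ζ) ≤ E(ξ) + E(ζ); (positive homogeneity) E(λξ) = λE(ξ) for all λ ≥ 0; and (continuity from above) E(ξ_n) → 0 for every sequence ξ_n ∈ C_b(Ω) with ξ_n ↓ 0 pointwise. Then there exists a nonempty set 𝒫 of Borel probability measures on Ω such that E(ξ) = max_{P ∈ 𝒫} ∫ ξ dP for every ξ ∈ C_b(Ω), the maximum being attained for each ξ. -/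
open MeasureTheory Filter BoundedContinuousFunction Set Metric Topology ENNReal NNReal

noncomputable section

namespace Stmt12Aux

variable {Ω : Type*} [MetricSpace Ω]

/-- Test functions subordinate to a set `U`. -/
def S (U : Set Ω) : Set (Ω →ᵇ ℝ) :=
  {f | (∀ x, 0 ≤ f x) ∧ (∀ x, f x ≤ 1) ∧ ∀ x ∉ U, f x = 0}

lemma zero_mem_S (U : Set Ω) : 0 ∈ S U :=
  ⟨fun x => le_of_eq rfl, fun x => by norm_num, fun x _ => rfl⟩

instance (U : Set Ω) : Nonempty ↥(S U) := ⟨⟨0, zero_mem_S U⟩⟩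

lemma one_mem_S_univ : (1 : Ω →ᵇ ℝ) ∈ S (univ : Set Ω) :=
  ⟨fun x => by norm_num, fun x => by norm_num, fun x hx => absurd (mem_univ x) hx⟩

variable (L : (Ω →ᵇ ℝ) →ₗ[ℝ] ℝ)

/-- The "content" of a set. -/
def mu (U : Set Ω) : ℝ≥0∞ := ⨆ f : ↥(S U), ENNReal.ofReal (L f)

lemma ofReal_le_mu {U : Set Ω} {f : Ω →ᵇ ℝ} (hf : f ∈ S U) :
    ENNReal.ofReal (L f) ≤ mu L U := le_iSup (fun g : ↥(S U) => ENNReal.ofReal (L g)) ⟨f, hf⟩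

lemma mu_mono {U V : Set Ω} (h : U ⊆ V) : mu L U ≤ mu L V :=
  iSup_le fun ⟨f, hf⟩ => ofReal_le_mu L ⟨hf.1, hf.2.1, fun x hx => hf.2.2 x fun hxU => hx (h hxU)⟩

lemma mu_empty : mu L (∅ : Set Ω) = 0 := by
  refine le_antisymm (iSup_le fun ⟨f, hf⟩ => ?_) (by simp)
  have : f = 0 := by ext x; exact hf.2.2 x (notMem_empty x)
  simp [this]

lemma L_nonneg (hLmono : ∀ f g : Ω →ᵇ ℝ, (∀ x, f x ≤ g x) → L f ≤ L g)
    {f : Ω →ᵇ ℝ} (h0 : ∀ x, 0 ≤ f x) : 0 ≤ L f := by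
  have := hLmono 0 f (by simpa using h0)
  simpa using this

lemma L_le_one (hLmono : ∀ f g : Ω →ᵇ ℝ, (∀ x, f x ≤ g x) → L f ≤ L g) (hL1 : L 1 = 1)
    {f : Ω →ᵇ ℝ} (h1 : ∀ x, f x ≤ 1) : L f ≤ 1 := by
  have := hLmono f 1 (by simpa using h1)
  rwa [hL1] at this

lemma mu_univ (hLmono : ∀ f g : Ω →ᵇ ℝ, (∀ x, f x ≤ g x) → L f ≤ L g) (hL1 : L 1 = 1) :
    mu L (univ : Set Ω) = 1 := by
  refine le_antisymm (iSup_le fun ⟨f, hf⟩ => ?_) ?_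
  · calc ENNReal.ofReal (L f) ≤ ENNReal.ofReal 1 :=
        ENNReal.ofReal_le_ofReal (L_le_one L hLmono hL1 hf.2.1)
    _ = 1 := by norm_num
  · have := ofReal_le_mu L (one_mem_S_univ (Ω := Ω))
    rwa [hL1, ENNReal.ofReal_one] at this

lemma mu_le_one (hLmono : ∀ f g : Ω →ᵇ ℝ, (∀ x, f x ≤ g x) → L f ≤ L g) (hL1 : L 1 = 1)
    (U : Set Ω) : mu L U ≤ 1 := by
  rw [← mu_univ L hLmono hL1]; exact mu_mono L (subset_univ U)

lemma daniell_up
    (hLcont : ∀ g : ℕ → Ω →ᵇ ℝ, (∀ ω, Antitone fun n => g n ω) →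
      (∀ ω, Tendsto (fun n => g n ω) atTop (nhds 0)) →
      Tendsto (fun n => L (g n)) atTop (nhds 0))
    {f : Ω →ᵇ ℝ} {h : ℕ → Ω →ᵇ ℝ} (hmn : ∀ x, Monotone fun k => h k x)
    (hlim : ∀ x, Tendsto (fun k => h k x) atTop (nhds (f x))) :
    Tendsto (fun k => L (h k)) atTop (nhds (L f)) := by
  have key := hLcont (fun k => f - h k)
    (fun ω k l hkl => by
      simp only [BoundedContinuousFunction.coe_sub, Pi.sub_apply]
      have := hmn ω hkl
      linarith)
    (fun ω => by
      have := ((hlim ω).const_sub (f ω))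
      simpa using this)
  have heq : (fun k => L (f - h k)) = fun k => L f - L (h k) := by
    funext k; simp [map_sub]
  rw [heq] at key
  have := key.const_sub (L f)
  simpa using this

/-- Urysohn-type functions increasing to the indicator of an open set. -/
def gk (U : Set Ω) (k : ℕ) : Ω →ᵇ ℝ :=
  BoundedContinuousFunction.mkOfBound
    ⟨fun x => min 1 ((k : ℝ) * infDist x Uᶜ),
      Continuous.min continuous_const (continuous_const.mul (continuous_infDist_pt Uᶜ))⟩
    1 (by
      intro x y
      have h1 : min 1 ((k : ℝ) * infDist x Uᶜ) ∈ Icc (0:ℝ) 1 :=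
        ⟨le_min zero_le_one (mul_nonneg (Nat.cast_nonneg k) infDist_nonneg), min_le_left _ _⟩
      have h2 : min 1 ((k : ℝ) * infDist y Uᶜ) ∈ Icc (0:ℝ) 1 :=
        ⟨le_min zero_le_one (mul_nonneg (Nat.cast_nonneg k) infDist_nonneg), min_le_left _ _⟩
      have := Real.dist_le_of_mem_Icc h1 h2
      simpa using this)

lemma gk_apply (U : Set Ω) (k : ℕ) (x : Ω) :
    gk U k x = min 1 ((k : ℝ) * infDist x Uᶜ) := rfl

lemma gk_nonneg (U : Set Ω) (k : ℕ) (x : Ω) : 0 ≤ gk U k x :=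
  le_min zero_le_one (mul_nonneg (Nat.cast_nonneg k) infDist_nonneg)

lemma gk_mem_S (U : Set Ω) (k : ℕ) : gk U k ∈ S U := by
  refine ⟨gk_nonneg U k, fun x => min_le_left _ _, fun x hx => ?_⟩
  rw [gk_apply, infDist_zero_of_mem (show x ∈ Uᶜ from hx), mul_zero]
  exact min_eq_right zero_le_one

lemma gk_mono (U : Set Ω) {k l : ℕ} (hkl : k ≤ l) (x : Ω) : gk U k x ≤ gk U l x := by
  rw [gk_apply, gk_apply]
  exact min_le_min le_rfl (mul_le_mul_of_nonneg_right (Nat.cast_le.2 hkl) infDist_nonneg)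

lemma gk_eventually_one {U : Set Ω} (hU : IsOpen U) (hUc : Uᶜ.Nonempty) {x : Ω} (hx : x ∈ U) :
    ∀ᶠ k in atTop, gk U k x = 1 := by
  have hd : 0 < infDist x Uᶜ := by
    rw [← hU.isClosed_compl.notMem_iff_infDist_pos hUc]
    simpa using hx
  filter_upwards [eventually_ge_atTop ⌈(infDist x Uᶜ)⁻¹⌉₊] with k hk
  rw [gk_apply, min_eq_left]
  have : (infDist x Uᶜ)⁻¹ ≤ (k : ℝ) := le_trans (Nat.le_ceil _) (Nat.cast_le.2 hk)
  calc (1 : ℝ) = (infDist x Uᶜ)⁻¹ * infDist x Uᶜ := by field_simp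
  _ ≤ (k : ℝ) * infDist x Uᶜ := by gcongr

lemma mu_iUnion_le (hLmono : ∀ f g : Ω →ᵇ ℝ, (∀ x, f x ≤ g x) → L f ≤ L g) (hL1 : L 1 = 1)
    (hLcont : ∀ g : ℕ → Ω →ᵇ ℝ, (∀ ω, Antitone fun n => g n ω) →
      (∀ ω, Tendsto (fun n => g n ω) atTop (nhds 0)) →
      Tendsto (fun n => L (g n)) atTop (nhds 0))
    (U : ℕ → Set Ω) (hU : ∀ i, IsOpen (U i)) :
    mu L (⋃ i, U i) ≤ ∑' i, mu L (U i) := by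
  by_cases hex : ∃ i, U i = univ
  · obtain ⟨i, hi⟩ := hex
    calc mu L (⋃ i, U i) ≤ 1 := mu_le_one L hLmono hL1 _
    _ = mu L (U i) := by rw [hi, mu_univ L hLmono hL1]
    _ ≤ ∑' i, mu L (U i) := ENNReal.le_tsum i
  · push_neg at hex
    have hUc : ∀ i, (U i)ᶜ.Nonempty := fun i => nonempty_compl.2 (hex i)
    refine iSup_le fun ⟨f, hf⟩ => ?_
    set s : ℕ → Ω →ᵇ ℝ := fun k => ∑ i ∈ Finset.range (k + 1), gk (U i) k with hs
    set h : ℕ → Ω →ᵇ ℝ := fun k => f ⊓ s k with hh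
    have hs_apply : ∀ k x, s k x = ∑ i ∈ Finset.range (k + 1), gk (U i) k x := by
      intro k x
      simp only [hs, BoundedContinuousFunction.coe_sum, Finset.sum_apply]
    have hs_nonneg : ∀ k x, 0 ≤ s k x := by
      intro k x; rw [hs_apply]; exact Finset.sum_nonneg fun i _ => gk_nonneg _ _ _
    have hs_mono : ∀ x, Monotone fun k => s k x := by
      intro x k l hkl
      show s k x ≤ s l x
      rw [hs_apply, hs_apply]
      calc ∑ i ∈ Finset.range (k + 1), gk (U i) k x
          ≤ ∑ i ∈ Finset.range (k + 1), gk (U i) l x :=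
            Finset.sum_le_sum fun i _ => gk_mono _ hkl x
      _ ≤ ∑ i ∈ Finset.range (l + 1), gk (U i) l x :=
            Finset.sum_le_sum_of_subset_of_nonneg
              (Finset.range_subset_range.2 (by omega)) (fun i _ _ => gk_nonneg _ _ _)
    have hh_apply : ∀ k x, h k x = min (f x) (s k x) := fun k x => rfl
    have hh_mono : ∀ x, Monotone fun k => h k x := by
      intro x k l hkl
      show h k x ≤ h l x
      rw [hh_apply, hh_apply]
      exact min_le_min le_rfl (hs_mono x hkl)
    have hh_lim : ∀ x, Tendsto (fun k => h k x) atTop (nhds (f x)) := by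
      intro x
      rcases eq_or_lt_of_le (hf.1 x) with hx0 | hx0
      · have heq : ∀ k, h k x = f x := by
          intro k; rw [hh_apply, ← hx0, min_eq_left (hs_nonneg k x)]
      
        simpa [heq] using (tendsto_const_nhds : Tendsto (fun _ : ℕ => f x) atTop (nhds (f x)))
      · have hxU : x ∈ ⋃ i, U i := by
          by_contra hxU
          exact absurd (hf.2.2 x hxU) (by linarith)
        obtain ⟨i, hi⟩ := mem_iUnion.1 hxU
        have hev : ∀ᶠ k in atTop, h k x = f x := by
          filter_upwards [gk_eventually_one (hU i) (hUc i) hi, eventually_ge_atTop (i + 1)]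
            with k hk1 hki
          rw [hh_apply, min_eq_left]
          calc f x ≤ 1 := hf.2.1 x
          _ = gk (U i) k x := hk1.symm
          _ ≤ s k x := by
            rw [hs_apply]
            exact Finset.single_le_sum (fun j _ => gk_nonneg _ _ _)
              (Finset.mem_range.2 (by omega))
        exact Tendsto.congr' (hev.mono fun k hk => hk.symm) tendsto_const_nhds
    have hLlim : Tendsto (fun k => L (h k)) atTop (nhds (L f)) :=
      daniell_up L hLcont hh_mono hh_lim
    have hbound : ∀ k, ENNReal.ofReal (L (h k)) ≤ ∑' i, mu L (U i) := by
      intro k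
      have h1 : L (h k) ≤ ∑ i ∈ Finset.range (k + 1), L (gk (U i) k) := by
        rw [← map_sum]
        refine hLmono _ _ fun x => ?_
        rw [hh_apply]
        exact le_trans (min_le_right _ _) (le_of_eq (by simp only [BoundedContinuousFunction.coe_sum, Finset.sum_apply]; exact hs_apply k x))
      calc ENNReal.ofReal (L (h k))
          ≤ ENNReal.ofReal (∑ i ∈ Finset.range (k + 1), L (gk (U i) k)) :=
            ENNReal.ofReal_le_ofReal h1
      _ = ∑ i ∈ Finset.range (k + 1), ENNReal.ofReal (L (gk (U i) k)) :=
            ENNReal.ofReal_sum_of_nonneg fun i _ =>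
              L_nonneg L hLmono (gk_nonneg (U i) k)
      _ ≤ ∑ i ∈ Finset.range (k + 1), mu L (U i) :=
            Finset.sum_le_sum fun i _ => ofReal_le_mu L (gk_mem_S (U i) k)
      _ ≤ ∑' i, mu L (U i) := ENNReal.sum_le_tsum _
    have hto : Tendsto (fun k => ENNReal.ofReal (L (h k))) atTop
        (nhds (ENNReal.ofReal (L f))) :=
      (ENNReal.continuous_ofReal.tendsto _).comp hLlim
    exact le_of_tendsto hto (Eventually.of_forall hbound)

/-- Disjoint additivity upper bound. -/
lemma mu_add_le (hLmono : ∀ f g : Ω →ᵇ ℝ, (∀ x, f x ≤ g x) → L f ≤ L g)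
    {V W U : Set Ω} (hVU : V ⊆ U) (hWU : W ⊆ U) (hd : Disjoint V W) :
    mu L V + mu L W ≤ mu L U := by
  rw [mu, mu]
  refine ENNReal.iSup_add_iSup_le fun ⟨f, hf⟩ ⟨g, hg⟩ => ?_
  have hmem : f + g ∈ S U := by
    refine ⟨fun x => add_nonneg (hf.1 x) (hg.1 x), fun x => ?_, fun x hx => ?_⟩
    · by_cases hxV : x ∈ V
      · have hz : g x = 0 := hg.2.2 x (disjoint_left.1 hd hxV)
        simp only [BoundedContinuousFunction.coe_add, Pi.add_apply, hz, add_zero]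
        exact hf.2.1 x
      · have hz : f x = 0 := hf.2.2 x hxV
        simp only [BoundedContinuousFunction.coe_add, Pi.add_apply, hz, zero_add]
        exact hg.2.1 x
    · simp only [BoundedContinuousFunction.coe_add, Pi.add_apply,
        hf.2.2 x fun h => hx (hVU h), hg.2.2 x fun h => hx (hWU h), add_zero]
  calc ENNReal.ofReal (L f) + ENNReal.ofReal (L g)
      = ENNReal.ofReal (L (f + g)) := by
        rw [map_add, ENNReal.ofReal_add (L_nonneg L hLmono hf.1) (L_nonneg L hLmono hg.1)]
  _ ≤ mu L U := ofReal_le_mu L hmem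

/-- The induced outer measure. -/
def mOut : OuterMeasure Ω :=
  OuterMeasure.ofFunction (fun A => ⨅ (_ : IsOpen A), mu L A)
    (by rw [iInf_pos isOpen_empty]; exact mu_empty L)

lemma m_le_mu {U : Set Ω} (hU : IsOpen U) : mOut L U ≤ mu L U :=
  (OuterMeasure.ofFunction_le U).trans_eq (iInf_pos hU)

lemma m_eq (hLmono : ∀ f g : Ω →ᵇ ℝ, (∀ x, f x ≤ g x) → L f ≤ L g) (hL1 : L 1 = 1)
    (hLcont : ∀ g : ℕ → Ω →ᵇ ℝ, (∀ ω, Antitone fun n => g n ω) →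
      (∀ ω, Tendsto (fun n => g n ω) atTop (nhds 0)) →
      Tendsto (fun n => L (g n)) atTop (nhds 0))
    (A : Set Ω) :
    mOut L A = ⨅ (U : Set Ω) (_ : IsOpen U) (_ : A ⊆ U), mu L U := by
  refine le_antisymm (le_iInf fun U => le_iInf fun hU => le_iInf fun hAU => ?_) ?_
  · exact le_trans ((mOut L).mono hAU) (m_le_mu L hU)
  · rw [mOut, OuterMeasure.ofFunction_apply]
    refine le_iInf fun t => le_iInf fun hsub => ?_
    by_cases hop : ∀ i, IsOpen (t i)
    · calc ⨅ (U : Set Ω) (_ : IsOpen U) (_ : A ⊆ U), mu L U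
          ≤ mu L (⋃ i, t i) := by
            refine iInf_le_of_le (⋃ i, t i) ?_
            rw [iInf_pos (isOpen_iUnion hop), iInf_pos hsub]
      _ ≤ ∑' i, mu L (t i) := mu_iUnion_le L hLmono hL1 hLcont t hop
      _ = ∑' i, ⨅ (_ : IsOpen (t i)), mu L (t i) := by
            congr 1; funext i; rw [iInf_pos (hop i)]
    · push_neg at hop
      obtain ⟨i, hi⟩ := hop
      have htop : (⨅ (_ : IsOpen (t i)), mu L (t i)) = ⊤ := by
        rw [iInf_neg hi]
      refine le_trans le_top (le_trans (le_of_eq htop.symm) (ENNReal.le_tsum i))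

lemma m_open (hLmono : ∀ f g : Ω →ᵇ ℝ, (∀ x, f x ≤ g x) → L f ≤ L g) (hL1 : L 1 = 1)
    (hLcont : ∀ g : ℕ → Ω →ᵇ ℝ, (∀ ω, Antitone fun n => g n ω) →
      (∀ ω, Tendsto (fun n => g n ω) atTop (nhds 0)) →
      Tendsto (fun n => L (g n)) atTop (nhds 0))
    {U : Set Ω} (hU : IsOpen U) : mOut L U = mu L U := by
  refine le_antisymm (m_le_mu L hU) ?_
  rw [m_eq L hLmono hL1 hLcont]
  exact le_iInf fun V => le_iInf fun hV => le_iInf fun hUV => mu_mono L hUV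

lemma m_isMetric (hLmono : ∀ f g : Ω →ᵇ ℝ, (∀ x, f x ≤ g x) → L f ≤ L g) (hL1 : L 1 = 1)
    (hLcont : ∀ g : ℕ → Ω →ᵇ ℝ, (∀ ω, Antitone fun n => g n ω) →
      (∀ ω, Tendsto (fun n => g n ω) atTop (nhds 0)) →
      Tendsto (fun n => L (g n)) atTop (nhds 0)) :
    (mOut L).IsMetric := by
  intro s t hst
  refine le_antisymm (measure_union_le s t) ?_
  obtain ⟨r, hr0, hr⟩ := hst
  set r' : ℝ≥0∞ := min r 1 with hr'
  have hr'0 : r' ≠ 0 := by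
    simp only [hr', ne_eq, min_eq_iff]
    push_neg
    constructor <;> intro h
    · exact absurd h hr0
    · exact absurd h one_ne_zero
  rw [m_eq L hLmono hL1 hLcont (s ∪ t)]
  refine le_iInf fun U => le_iInf fun hU => le_iInf fun hsub => ?_
  set Vs : Set Ω := U ∩ {x | Metric.infEDist x s < r' / 2} with hVs
  set Vt : Set Ω := U ∩ {x | Metric.infEDist x t < r' / 2} with hVt
  have hVso : IsOpen Vs := hU.inter (isOpen_lt Metric.continuous_infEDist continuous_const)
  have hVto : IsOpen Vt := hU.inter (isOpen_lt Metric.continuous_infEDist continuous_const)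
  have hsVs : s ⊆ Vs := fun x hx =>
    ⟨hsub (Or.inl hx), by
      simp only [mem_setOf_eq, Metric.infEDist_zero_of_mem hx]
      exact ENNReal.half_pos hr'0⟩
  have htVt : t ⊆ Vt := fun x hx =>
    ⟨hsub (Or.inr hx), by
      simp only [mem_setOf_eq, Metric.infEDist_zero_of_mem hx]
      exact ENNReal.half_pos hr'0⟩
  have hdisj : Disjoint Vs Vt := by
    rw [disjoint_left]
    rintro x ⟨-, hxs⟩ ⟨-, hxt⟩
    rw [mem_setOf_eq, Metric.infEDist_lt_iff] at hxs hxt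
    obtain ⟨y, hy, hxy⟩ := hxs
    obtain ⟨z, hz, hxz⟩ := hxt
    have h1 : edist y z ≤ edist y x + edist x z := edist_triangle _ _ _
    have h2 : edist y x + edist x z < r' / 2 + r' / 2 :=
      ENNReal.add_lt_add (edist_comm x y ▸ hxy) hxz
    have h3 : edist y z < r' := by
      rw [ENNReal.add_halves] at h2
      exact lt_of_le_of_lt h1 h2
    have h4 : r' ≤ edist y z := le_trans (min_le_left r 1) (hr y hy z hz)
    exact absurd h3 (not_lt.2 h4)
  calc mOut L s + mOut L t ≤ mu L Vs + mu L Vt := by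
        gcongr
        · rw [m_eq L hLmono hL1 hLcont s]
          exact iInf_le_of_le Vs (by rw [iInf_pos hVso, iInf_pos hsVs])
        · rw [m_eq L hLmono hL1 hLcont t]
          exact iInf_le_of_le Vt (by rw [iInf_pos hVto, iInf_pos htVt])
  _ ≤ mu L U := mu_add_le L hLmono inter_subset_left inter_subset_left hdisj

theorem exists_rep [MeasurableSpace Ω] [BorelSpace Ω]
    (hLmono : ∀ f g : Ω →ᵇ ℝ, (∀ x, f x ≤ g x) → L f ≤ L g) (hL1 : L 1 = 1)
    (hLcont : ∀ g : ℕ → Ω →ᵇ ℝ, (∀ ω, Antitone fun n => g n ω) →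
      (∀ ω, Tendsto (fun n => g n ω) atTop (nhds 0)) →
      Tendsto (fun n => L (g n)) atTop (nhds 0)) :
    ∃ P : Measure Ω, IsProbabilityMeasure P ∧ ∀ ξ : Ω →ᵇ ℝ, ∫ x, ξ x ∂P = L ξ := by
  have hcar : ‹MeasurableSpace Ω› ≤ (mOut L).caratheodory := by
    rw [BorelSpace.measurable_eq (α := Ω)]
    exact (m_isMetric L hLmono hL1 hLcont).borel_le_caratheodory
  set P : Measure Ω := (mOut L).toMeasure hcar with hP
  have hP_open : ∀ {U : Set Ω}, IsOpen U → P U = mu L U := by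
    intro U hU
    rw [hP, toMeasure_apply _ _ hU.measurableSet,
      m_open L hLmono hL1 hLcont hU]
  have hprob : IsProbabilityMeasure P :=
    ⟨by rw [hP_open isOpen_univ, mu_univ L hLmono hL1]⟩
  haveI := hprob
  -- the main inequality, for functions with values in [0,1]
  have hle : ∀ ξ : Ω →ᵇ ℝ, (∀ x, 0 ≤ ξ x) → (∀ x, ξ x ≤ 1) → ∫ x, ξ x ∂P ≤ L ξ := by
    intro ξ hξ0 hξ1
    have key : ∀ N : ℕ, 0 < N → ∫ x, ξ x ∂P ≤ L ξ + 2 / N := by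
      intro N hN
      have hN' : (0 : ℝ) < N := by exact_mod_cast hN
      set U : ℕ → Set Ω := fun j => {x | (j : ℝ) / N < ξ x} with hUdef
      have hUopen : ∀ j, IsOpen (U j) := fun j =>
        isOpen_lt continuous_const ξ.continuous
      have hUmeas : ∀ j, MeasurableSet (U j) := fun j => (hUopen j).measurableSet
      set e : ℕ → Ω →ᵇ ℝ :=
        fun j => (1 : Ω →ᵇ ℝ) ⊓ (0 ⊔ ((N : ℝ) • ξ - const Ω ((j : ℝ) - 1))) with he
      have he_apply : ∀ j x, e j x = min 1 (max 0 ((N : ℝ) * ξ x - ((j : ℝ) - 1))) := by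
        intro j x
        simp only [he, BoundedContinuousFunction.coe_inf, Pi.inf_apply,
          BoundedContinuousFunction.coe_sup, Pi.sup_apply,
          BoundedContinuousFunction.coe_sub, Pi.sub_apply,
          BoundedContinuousFunction.coe_smul, Pi.smul_apply, smul_eq_mul,
          BoundedContinuousFunction.coe_one, Pi.one_apply,
          BoundedContinuousFunction.coe_zero, Pi.zero_apply,
          BoundedContinuousFunction.const_apply]
      have he_nonneg : ∀ j x, 0 ≤ e j x := by
        intro j x
        rw [he_apply]
        exact le_min zero_le_one (le_max_left _ _)
      have key1 : ∀ j, P (U j) ≤ ENNReal.ofReal (L (e j)) := by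
        intro j
        rw [hP_open (hUopen j)]
        refine iSup_le fun ⟨f, hf⟩ => ENNReal.ofReal_le_ofReal (hLmono f (e j) fun x => ?_)
        by_cases hx : x ∈ U j
        · have hlt : (j : ℝ) / N < ξ x := hx
          have hge : (1 : ℝ) ≤ (N : ℝ) * ξ x - ((j : ℝ) - 1) := by
            rw [div_lt_iff₀ hN'] at hlt
            nlinarith
          rw [he_apply, max_eq_right (le_trans zero_le_one hge), min_eq_left hge]
          exact hf.2.1 x
        · rw [hf.2.2 x hx]
          exact he_nonneg j x
      have key2 : ∀ x, (N : ℝ) * ξ x ≤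
          ∑ j ∈ Finset.range N, (U j).indicator (fun _ => (1 : ℝ)) x := by
        intro x
        set c := ⌈(N : ℝ) * ξ x⌉₊ with hc
        have hind : ∀ j, (U j).indicator (fun _ => (1 : ℝ)) x = if j < c then 1 else 0 := by
          intro j
          by_cases hj : x ∈ U j
          · rw [indicator_of_mem hj, if_pos]
            rw [hc, Nat.lt_ceil]
            have hlt : (j : ℝ) / N < ξ x := hj
            rw [div_lt_iff₀ hN'] at hlt
            nlinarith
          · rw [indicator_of_notMem hj, if_neg]
            intro hlt
            rw [hc, Nat.lt_ceil] at hlt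
            refine hj ?_
            show (j : ℝ) / N < ξ x
            rw [div_lt_iff₀ hN']
            nlinarith
        rw [Finset.sum_congr rfl fun j _ => hind j]
        have hsum : ∑ j ∈ Finset.range N, (if j < c then (1 : ℝ) else 0)
            = ((Finset.range N).filter (· < c)).card := by
          rw [Finset.sum_ite, Finset.sum_const, Finset.sum_const_zero, add_zero,
            nsmul_eq_mul, mul_one]
        have hfilt : (Finset.range N).filter (· < c) = Finset.range (min c N) := by
          ext j
          simp only [Finset.mem_filter, Finset.mem_range, lt_min_iff]
          tauto
        rw [hsum, hfilt, Finset.card_range]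
        have h1 : (N : ℝ) * ξ x ≤ c := Nat.le_ceil _
        have h2 : (N : ℝ) * ξ x ≤ N := by nlinarith [hξ1 x]
        rcases le_or_gt c N with h | h
        · rw [min_eq_left h]; exact h1
        · rw [min_eq_right h.le]; exact h2
      have key3 : ∀ x, ∑ j ∈ Finset.range N, e j x ≤ (N : ℝ) * ξ x + 2 := by
        intro x
        set c' := ⌈(N : ℝ) * ξ x + 1⌉₊ with hc'
        have hterm : ∀ j, e j x ≤ if j < c' then 1 else 0 := by
          intro j
          by_cases hj : j < c'
          · rw [if_pos hj, he_apply]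
            exact min_le_left _ _
          · rw [if_neg hj, he_apply]
            have hge : (N : ℝ) * ξ x + 1 ≤ j := by
              have := (Nat.ceil_le.1 (not_lt.1 hj))
              exact_mod_cast this
            refine le_trans (min_le_right _ _) (le_of_eq (max_eq_left (by linarith)))
        calc ∑ j ∈ Finset.range N, e j x
            ≤ ∑ j ∈ Finset.range N, (if j < c' then (1 : ℝ) else 0) :=
              Finset.sum_le_sum fun j _ => hterm j
        _ = ((Finset.range N).filter (· < c')).card := by
              rw [Finset.sum_ite, Finset.sum_const, Finset.sum_const_zero, add_zero,
                nsmul_eq_mul, mul_one]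
        _ ≤ (c' : ℝ) := by
              have hcard : ((Finset.range N).filter (· < c')).card ≤ c' := by
                refine le_trans (Finset.card_le_card fun j hj => ?_) (le_of_eq (Finset.card_range c'))
                exact Finset.mem_range.2 (Finset.mem_filter.1 hj).2
              exact_mod_cast hcard
        _ ≤ (N : ℝ) * ξ x + 2 := by
              have h0 : (0 : ℝ) ≤ (N : ℝ) * ξ x + 1 := by nlinarith [hξ0 x, hN'.le]
              have := Nat.ceil_lt_add_one h0
              rw [← hc'] at this
              linarith
      have hInd_int : ∀ j, Integrable ((U j).indicator fun _ => (1 : ℝ)) P :=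
        fun j => (integrable_const (1 : ℝ)).indicator (hUmeas j)
      have h2 : (N : ℝ) * ∫ x, ξ x ∂P ≤
          ∑ j ∈ Finset.range N, (P (U j)).toReal := by
        calc (N : ℝ) * ∫ x, ξ x ∂P = ∫ x, (N : ℝ) * ξ x ∂P := (integral_const_mul _ _).symm
        _ ≤ ∫ x, (∑ j ∈ Finset.range N, (U j).indicator (fun _ => (1 : ℝ)) x) ∂P :=
            integral_mono ((ξ.integrable P).const_mul _)
              (integrable_finset_sum _ fun j _ => hInd_int j) key2
        _ = ∑ j ∈ Finset.range N, ∫ x, (U j).indicator (fun _ => (1 : ℝ)) x ∂P :=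
            integral_finset_sum _ fun j _ => hInd_int j
        _ = ∑ j ∈ Finset.range N, (P (U j)).toReal := by
            refine Finset.sum_congr rfl fun j _ => ?_
            rw [integral_indicator_const (1 : ℝ) (hUmeas j)]
            simp [Measure.real]
      have h4 : ∑ j ∈ Finset.range N, (P (U j)).toReal ≤ ∑ j ∈ Finset.range N, L (e j) :=
        Finset.sum_le_sum fun j _ =>
          ENNReal.toReal_le_of_le_ofReal (L_nonneg L hLmono (he_nonneg j)) (key1 j)
      have h6 : ∑ j ∈ Finset.range N, L (e j) ≤ (N : ℝ) * L ξ + 2 := by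
        rw [← map_sum]
        calc L (∑ j ∈ Finset.range N, e j) ≤ L ((N : ℝ) • ξ + const Ω 2) := by
              refine hLmono _ _ fun x => ?_
              have h3 := key3 x
              simp only [BoundedContinuousFunction.coe_sum, Finset.sum_apply,
                BoundedContinuousFunction.coe_add, Pi.add_apply,
                BoundedContinuousFunction.coe_smul, Pi.smul_apply, smul_eq_mul,
                BoundedContinuousFunction.const_apply]
              exact h3
        _ = (N : ℝ) * L ξ + 2 := by
              have hconst2 : const Ω (2 : ℝ) = (2 : ℝ) • (1 : Ω →ᵇ ℝ) := by
                ext x; simp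
              rw [map_add, hconst2, _root_.map_smul, _root_.map_smul, hL1]
              simp [smul_eq_mul]
      have hfin : (N : ℝ) * ∫ x, ξ x ∂P ≤ (N : ℝ) * L ξ + 2 := by
        linarith
      rw [← mul_le_mul_iff_right₀ hN']
      calc (N : ℝ) * ∫ x, ξ x ∂P ≤ (N : ℝ) * L ξ + 2 := hfin
      _ = (N : ℝ) * (L ξ + 2 / N) := by field_simp
    have hlim : Tendsto (fun N : ℕ => L ξ + 2 / (N : ℝ)) atTop (nhds (L ξ)) := by
      have h := Tendsto.add (tendsto_const_nhds : Tendsto (fun _ : ℕ => L ξ) atTop (nhds (L ξ)))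
        (_root_.tendsto_const_div_atTop_nhds_zero_nat 2)
      simpa using h
    refine ge_of_tendsto hlim ?_
    filter_upwards [eventually_gt_atTop 0] with N hN using key N hN
  -- upgrade to equality for functions with values in [0,1]
  have heq01 : ∀ ξ : Ω →ᵇ ℝ, (∀ x, 0 ≤ ξ x) → (∀ x, ξ x ≤ 1) → ∫ x, ξ x ∂P = L ξ := by
    intro ξ hξ0 hξ1
    refine le_antisymm (hle ξ hξ0 hξ1) ?_
    have h1 : ∫ x, (1 - ξ) x ∂P ≤ L (1 - ξ) := by
      refine hle (1 - ξ) (fun x => ?_) (fun x => ?_) <;>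
        simp only [BoundedContinuousFunction.coe_sub, Pi.sub_apply,
          BoundedContinuousFunction.coe_one, Pi.one_apply]
      · linarith [hξ1 x]
      · linarith [hξ0 x]
    have h2 : ∫ x, (1 - ξ) x ∂P = 1 - ∫ x, ξ x ∂P := by
      have : ∀ x, (1 - ξ) x = 1 - ξ x := fun x => by
        simp [BoundedContinuousFunction.coe_sub]
      rw [integral_congr_ae (Eventually.of_forall fun x => this x),
        integral_sub (integrable_const 1) (ξ.integrable P), integral_const]
      simp
    have h3 : L (1 - ξ) = 1 - L ξ := by rw [map_sub, hL1]
    rw [h2, h3] at h1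
    linarith
  -- general case by affine rescaling
  refine ⟨P, hprob, fun ξ => ?_⟩
  set C : ℝ := ‖ξ‖ + 1 with hC
  have hC0 : 0 < C := by positivity
  set η : Ω →ᵇ ℝ := (2 * C)⁻¹ • (ξ + const Ω C) with hη
  have hη_apply : ∀ x, η x = (2 * C)⁻¹ * (ξ x + C) := by
    intro x
    simp [hη, BoundedContinuousFunction.coe_smul]
    ring
  have hbd : ∀ x, |ξ x| ≤ ‖ξ‖ := fun x => by
    simpa using ξ.norm_coe_le_norm x
  have hη0 : ∀ x, 0 ≤ η x := by
    intro x
    rw [hη_apply]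
    have := abs_le.1 (hbd x)
    have h1 : 0 ≤ ξ x + C := by simp only [hC]; linarith [this.1]
    positivity
  have hη1 : ∀ x, η x ≤ 1 := by
    intro x
    rw [hη_apply]
    have := abs_le.1 (hbd x)
    rw [inv_mul_le_iff₀ (by positivity), mul_one]
    simp only [hC]
    linarith [this.2]
  have hηint : ∫ x, η x ∂P = L η := heq01 η hη0 hη1
  have hξeq : ∀ x, ξ x = (2 * C) * η x - C := by
    intro x
    rw [hη_apply]
    field_simp
    ring
  have hξfun : ξ = (2 * C) • η - const Ω C := by
    ext x
    simp only [BoundedContinuousFunction.coe_sub, Pi.sub_apply,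
      BoundedContinuousFunction.coe_smul, Pi.smul_apply, smul_eq_mul,
      BoundedContinuousFunction.const_apply]
    exact hξeq x
  have hLconst : ∀ c : ℝ, L (const Ω c) = c := by
    intro c
    have : const Ω c = c • (1 : Ω →ᵇ ℝ) := by ext x; simp
    rw [this, _root_.map_smul, hL1, smul_eq_mul, mul_one]
  calc ∫ x, ξ x ∂P = ∫ x, ((2 * C) * η x - C) ∂P := by
        exact integral_congr_ae (Eventually.of_forall fun x => hξeq x)
  _ = (2 * C) * ∫ x, η x ∂P - C := by
        rw [integral_sub ((η.integrable P).const_mul _) (integrable_const C),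
          integral_const_mul, integral_const]
        simp
  _ = (2 * C) * L η - C := by rw [hηint]
  _ = L ξ := by
        have hsm : L ((2 * C) • η) = (2 * C) * L η := by
          rw [_root_.map_smul, smul_eq_mul]
        conv_rhs => rw [hξfun]
        rw [map_sub, hLconst, hsm]

end Stmt12Aux

/-- a monotone, constant-preserving, subadditive, positively homogeneous
functional on `C_b(Ω)` (`Ω` a metric space) which is continuous from above is represented
as a maximum of integrals over a nonempty family of Borel probability measures, the
maximum being attained for each `ξ ∈ C_b(Ω)`. -/
theorem stmt12 {Ω : Type*} [MetricSpace Ω] [MeasurableSpace Ω] [BorelSpace Ω]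
    (E : (Ω →ᵇ ℝ) → ℝ)
    (hmono : ∀ ξ ζ : Ω →ᵇ ℝ, (∀ ω, ζ ω ≤ ξ ω) → E ζ ≤ E ξ)
    (hconst : ∀ c : ℝ, E (BoundedContinuousFunction.const Ω c) = c)
    (hsub : ∀ ξ ζ : Ω →ᵇ ℝ, E (ξ + ζ) ≤ E ξ + E ζ)
    (hhom : ∀ (lam : ℝ), 0 ≤ lam → ∀ ξ : Ω →ᵇ ℝ, E (lam • ξ) = lam * E ξ)
    (hcont : ∀ ξ : ℕ → Ω →ᵇ ℝ, (∀ ω, Antitone fun n => ξ n ω) →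
      (∀ ω, Tendsto (fun n => ξ n ω) atTop (nhds 0)) →
      Tendsto (fun n => E (ξ n)) atTop (nhds 0)) :
    ∃ 𝔓 : Set (Measure Ω), 𝔓.Nonempty ∧ (∀ P ∈ 𝔓, IsProbabilityMeasure P) ∧
      ∀ ξ : Ω →ᵇ ℝ, (∀ P ∈ 𝔓, ∫ ω, ξ ω ∂P ≤ E ξ) ∧ ∃ P ∈ 𝔓, E ξ = ∫ ω, ξ ω ∂P := by
  rcases isEmpty_or_nonempty Ω with hΩ | hΩ
  · exfalso
    have h01 : BoundedContinuousFunction.const Ω (0 : ℝ)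
        = BoundedContinuousFunction.const Ω (1 : ℝ) := by
      ext ω; exact (hΩ.false ω).elim
    have h0 := hconst 0
    rw [h01, hconst 1] at h0
    norm_num at h0
  · have hzero : (BoundedContinuousFunction.const Ω (0 : ℝ)) = 0 := by ext ω; simp
    have hE0 : E 0 = 0 := by rw [← hzero, hconst 0]
    have hEneg : ∀ ξ : Ω →ᵇ ℝ, -E ξ ≤ E (-ξ) := by
      intro ξ
      have h := hsub ξ (-ξ)
      rw [add_neg_cancel, hE0] at h
      linarith
    have key : ∀ ξ₀ : Ω →ᵇ ℝ, ξ₀ ≠ 0 → ∃ P : Measure Ω, IsProbabilityMeasure P ∧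
        (∀ ξ : Ω →ᵇ ℝ, ∫ ω, ξ ω ∂P ≤ E ξ) ∧ E ξ₀ = ∫ ω, ξ₀ ω ∂P := by
      intro ξ₀ hξ₀
      have hfle : ∀ x : (LinearPMap.mkSpanSingleton (K := ℝ) (σ := RingHom.id ℝ) ξ₀ (E ξ₀) hξ₀).domain,
          (LinearPMap.mkSpanSingleton (K := ℝ) (σ := RingHom.id ℝ) ξ₀ (E ξ₀) hξ₀) x ≤ E x := by
        rintro ⟨x, hx⟩
        obtain ⟨t, rfl⟩ := Submodule.mem_span_singleton.1 hx
        have happ : (LinearPMap.mkSpanSingleton (K := ℝ) (σ := RingHom.id ℝ) ξ₀ (E ξ₀) hξ₀) ⟨t • ξ₀, hx⟩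
            = t • E ξ₀ := LinearPMap.mkSpanSingleton'_apply _ _ _ t hx
        rw [happ, smul_eq_mul]
        rcases le_or_gt 0 t with ht | ht
        · rw [hhom t ht]
        · have hsm : t • ξ₀ = (-t) • (-ξ₀) := (neg_smul_neg t ξ₀).symm
          have h1 : E (t • ξ₀) = (-t) * E (-ξ₀) := by
            rw [hsm, hhom (-t) (by linarith) (-ξ₀)]
          have h2 := hEneg ξ₀
          nlinarith
      obtain ⟨L, hLf, hLle⟩ := exists_extension_of_le_sublinear
        (LinearPMap.mkSpanSingleton (K := ℝ) (σ := RingHom.id ℝ) ξ₀ (E ξ₀) hξ₀) E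
        (fun c hc ξ => hhom c hc.le ξ) hsub hfle
      have hLmono : ∀ f g : Ω →ᵇ ℝ, (∀ x, f x ≤ g x) → L f ≤ L g := by
        intro a b hab
        have h2 : L (a - b) ≤ E (a - b) := hLle _
        have h3 : E (a - b) ≤ E 0 := by
          refine hmono 0 (a - b) fun ω => ?_
          simp only [BoundedContinuousFunction.coe_sub, Pi.sub_apply,
            BoundedContinuousFunction.coe_zero, Pi.zero_apply]
          linarith [hab ω]
        rw [map_sub, hE0] at *
        linarith
      have hone : (1 : Ω →ᵇ ℝ) = BoundedContinuousFunction.const Ω (1 : ℝ) := by ext ω; simp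
      have hL1 : L 1 = 1 := by
        have h1 : L 1 ≤ 1 := by
          have := hLle 1
          rwa [hone, hconst 1] at this
        have h2 : L (-1) ≤ -1 := by
          have := hLle (-1)
          have hneg : (-1 : Ω →ᵇ ℝ) = BoundedContinuousFunction.const Ω (-1 : ℝ) := by
            ext ω; simp
          rwa [hneg, hconst (-1)] at this
        rw [map_neg] at h2
        linarith
      have hLcont : ∀ g : ℕ → Ω →ᵇ ℝ, (∀ ω, Antitone fun n => g n ω) →
          (∀ ω, Tendsto (fun n => g n ω) atTop (nhds 0)) →
          Tendsto (fun n => L (g n)) atTop (nhds 0) := by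
        intro g hanti htend
        have hg0 : ∀ n ω, 0 ≤ g n ω := fun n ω =>
          le_of_tendsto (htend ω) (eventually_atTop.2 ⟨n, fun m hm => hanti ω hm⟩)
        have hup : ∀ n, L (g n) ≤ E (g n) := fun n => hLle _
        have hdn : ∀ n, 0 ≤ L (g n) := fun n => Stmt12Aux.L_nonneg L hLmono (hg0 n)
        exact squeeze_zero hdn hup (hcont g hanti htend)
      obtain ⟨P, hPprob, hPint⟩ := Stmt12Aux.exists_rep L hLmono hL1 hLcont
      have hLξ₀ : L ξ₀ = E ξ₀ := by
        have h := hLf ⟨ξ₀, Submodule.mem_span_singleton_self ξ₀⟩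
        rwa [LinearPMap.mkSpanSingleton_apply] at h
      exact ⟨P, hPprob, fun ξ => le_trans (le_of_eq (hPint ξ)) (hLle ξ),
        by rw [hPint ξ₀, hLξ₀]⟩
    have honene : (1 : Ω →ᵇ ℝ) ≠ 0 := by
      intro h
      obtain ⟨ω⟩ := hΩ
      have := congrArg (fun f : Ω →ᵇ ℝ => f ω) h
      norm_num at this
    obtain ⟨P₁, hP₁prob, hP₁int, -⟩ := key 1 honene
    refine ⟨{P | IsProbabilityMeasure P ∧ ∀ ξ : Ω →ᵇ ℝ, ∫ ω, ξ ω ∂P ≤ E ξ},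
      ⟨P₁, hP₁prob, hP₁int⟩, fun P hP => hP.1, fun ξ => ⟨fun P hP => hP.2 ξ, ?_⟩⟩
    by_cases hξ : ξ = 0
    · subst hξ
      refine ⟨P₁, ⟨hP₁prob, hP₁int⟩, ?_⟩
      simp [hE0]
    · obtain ⟨P, h1, h2, h3⟩ := key ξ hξ
      exact ⟨P, ⟨h1, h2⟩, h3⟩


end
end
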